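/- arXiv:2107.07834 — 7 statements merged into one kernel-verified Lean document; each statement's English description precedes it below -/
import Mathlib

section
/- Let N be a rooted weighted digraph with root ρ, leaf set X and non-negative arc weights. Then the function AllPaths-PD_N is submodular: for all subsets A, B ⊆ X, AllPaths-PD_N(A ∪ B) + AllPaths-PD_N(A ∩ B) ≤ AllPaths-PD_N(A) + AllPaths-PD_N(B). -/
attribute [local instance] Classical.propDecidable

/-- A rooted weighted digraph: a finite directed acyclic graph with a distinguished
root from which every vertex is reachable, and non-negative real arc weights.
The leaf set is the set of sinks. -/
structure RWDigraph (V : Type) where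
  verts : Finset V
  arcs : Finset (V × V)
  root : V
  w : V × V → ℝ
  w_nonneg : ∀ e, 0 ≤ w e
  root_mem : root ∈ verts
  arc_mem : ∀ e ∈ arcs, e.1 ∈ verts ∧ e.2 ∈ verts
  acyclic : ∀ v : V, ¬ Relation.TransGen (fun a b => (a, b) ∈ arcs) v v
  reach : ∀ v ∈ verts, Relation.ReflTransGen (fun a b => (a, b) ∈ arcs) root v

namespace RWDigraph

variable {V : Type}

/-- The arc relation of a rooted weighted digraph. -/
def Arc (N : RWDigraph V) (u v : V) : Prop := (u, v) ∈ N.arcs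

/-- The leaf set `X`: the set of sinks (vertices with no outgoing arcs). -/
def leaves (N : RWDigraph V) : Set V := {v | v ∈ N.verts ∧ ∀ u, ¬ N.Arc v u}

/-- `Anc S`: the set of arcs `(u,v)` such that some leaf in `S` is reachable from `v`
by a directed path. -/
def anc (N : RWDigraph V) (S : Set V) : Set (V × V) :=
  {e | N.Arc e.1 e.2 ∧ ∃ ℓ ∈ S, Relation.ReflTransGen N.Arc e.2 ℓ}

/-- `AllPaths-PD_N(S) = ∑_{e ∈ Anc(S)} w(e)`. -/
noncomputable def allPathsPD (N : RWDigraph V) (S : Set V) : ℝ :=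
  ∑ e ∈ N.arcs.filter (fun e => e ∈ N.anc S), N.w e

end RWDigraph

/-! Anc(A ∪ B) = Anc(A) ∪ Anc(B) and Anc(A ∩ B) ⊆ Anc(A) ∩ Anc(B), while total arc weight is a
modular and monotone function of a set of arcs; submodularity follows at once. -/

namespace RWDigraph

variable {V : Type} (N : RWDigraph V)

noncomputable def arcWeight (s : Set (V × V)) : ℝ :=
  ∑ e ∈ N.arcs.filter (· ∈ s), N.w e

theorem allPathsPD_eq_arcWeight_anc (S : Set V) : N.allPathsPD S = N.arcWeight (N.anc S) := rfl

theorem arcWeight_mono {s t : Set (V × V)} (h : s ⊆ t) : N.arcWeight s ≤ N.arcWeight t :=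
  Finset.sum_le_sum_of_subset_of_nonneg (Finset.monotone_filter_right _ fun _ _ he => h he)
    fun e _ _ => N.w_nonneg e

theorem arcWeight_union_add_inter (s t : Set (V × V)) :
    N.arcWeight (s ∪ t) + N.arcWeight (s ∩ t) = N.arcWeight s + N.arcWeight t := by
  simp only [arcWeight, Set.mem_union, Set.mem_inter_iff, Finset.filter_or, Finset.filter_and]
  exact Finset.sum_union_inter

theorem anc_mono {A B : Set V} (h : A ⊆ B) : N.anc A ⊆ N.anc B :=
  fun _ ⟨he, ℓ, hℓ, hr⟩ => ⟨he, ℓ, h hℓ, hr⟩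

theorem anc_union (A B : Set V) : N.anc (A ∪ B) = N.anc A ∪ N.anc B := by
  ext e
  simp only [anc, Set.mem_union, Set.mem_ofPred_eq, ← and_or_left, exists_or, or_and_right]

theorem anc_inter_subset (A B : Set V) : N.anc (A ∩ B) ⊆ N.anc A ∩ N.anc B :=
  Set.subset_inter (N.anc_mono Set.inter_subset_left) (N.anc_mono Set.inter_subset_right)

end RWDigraph

theorem allPathsPD_submodular_general {V : Type} (N : RWDigraph V) (A B : Set V) :
    N.allPathsPD (A ∪ B) + N.allPathsPD (A ∩ B) ≤ N.allPathsPD A + N.allPathsPD B := by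
  simp only [RWDigraph.allPathsPD_eq_arcWeight_anc, RWDigraph.anc_union]
  calc N.arcWeight (N.anc A ∪ N.anc B) + N.arcWeight (N.anc (A ∩ B))
      ≤ N.arcWeight (N.anc A ∪ N.anc B) + N.arcWeight (N.anc A ∩ N.anc B) := by
        gcongr
        exact N.arcWeight_mono (N.anc_inter_subset A B)
    _ = N.arcWeight (N.anc A) + N.arcWeight (N.anc B) := N.arcWeight_union_add_inter _ _

/-- `AllPaths-PD_N` is submodular on subsets of the leaf set. -/
theorem allPathsPD_submodular {V : Type} (N : RWDigraph V) (A B : Set V)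
    (hA : A ⊆ N.leaves) (hB : B ⊆ N.leaves) :
    N.allPathsPD (A ∪ B) + N.allPathsPD (A ∩ B) ≤ N.allPathsPD A + N.allPathsPD B :=
  allPathsPD_submodular_general N A B
end

section
/- For every finite set E and every finite family S_1, …, S_n of subsets of E, there exists a rooted weighted digraph N with root ρ, arc weights taking values in {0,1}, and leaf set consisting of n leaves v_1, …, v_n (one for each member of the family) such that for every index set I ⊆ {1, …, n}, AllPaths-PD_N({v_i : i ∈ I}) = |⋃_{i ∈ I} S_i|. -/
attribute [local instance] Classical.propDecidable

/-! Every set `S i` becomes a leaf `leaf i`, and every element `x` an intermediate vertex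
`elem x` hanging below the root by an arc of weight one, with arcs of weight zero from
`elem x` to the leaves of the sets containing `x`, and from the root to every leaf (so that
the leaves of empty sets are reachable too). The weighted arcs above a set of leaves are
then exactly the arcs `root → elem x` with `x` in one of the chosen sets, so AllPaths-PD
counts the covered elements. -/

theorem Relation.not_transGen_self_of_strictMono {β γ : Type*} [Preorder γ] {r : β → β → Prop}
    (f : β → γ) (hf : ∀ a b, r a b → f a < f b) (a : β) : ¬ Relation.TransGen r a a := fun h =>
  lt_irrefl (f a) <| by simpa only [Relation.transGen_eq_self] using h.lift f hf

inductive CoverVertex (α ι : Type) where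
  | root
  | elem (x : α)
  | leaf (i : ι)

namespace CoverVertex

variable {α ι : Type}

def rank : CoverVertex α ι → ℕ
  | root => 0
  | elem _ => 1
  | leaf _ => 2

inductive Arc (S : ι → Finset α) : CoverVertex α ι → CoverVertex α ι → Prop
  | root_elem {x : α} (i : ι) : x ∈ S i → Arc S root (elem x)
  | root_leaf (i : ι) : Arc S root (leaf i)
  | elem_leaf {x : α} {i : ι} : x ∈ S i → Arc S (elem x) (leaf i)

theorem Arc.rank_lt {S : ι → Finset α} {u v : CoverVertex α ι} (h : Arc S u v) :
    u.rank < v.rank := by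
  cases h <;> simp [rank]

theorem not_arc_leaf {S : ι → Finset α} (i : ι) (v : CoverVertex α ι) : ¬ Arc S (leaf i) v :=
  nofun

def weight : CoverVertex α ι × CoverVertex α ι → ℝ
  | (root, elem _) => 1
  | _ => 0

theorem weight_eq_zero_or_one (e : CoverVertex α ι × CoverVertex α ι) :
    weight e = 0 ∨ weight e = 1 := by
  unfold weight
  split <;> simp

theorem exists_eq_root_elem_of_weight_ne_zero {e : CoverVertex α ι × CoverVertex α ι}
    (h : weight e ≠ 0) : ∃ x, e = (root, elem x) := by
  unfold weight at h
  split at h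
  · exact ⟨_, rfl⟩
  · exact absurd rfl h

variable [Fintype ι] (S : ι → Finset α)

noncomputable def verts : Finset (CoverVertex α ι) :=
  insert root ((Finset.univ.biUnion S).image elem ∪ Finset.univ.image leaf)

theorem elem_mem_verts {x : α} {i : ι} (hx : x ∈ S i) : elem x ∈ verts S := by
  simp only [verts, Finset.mem_insert, Finset.mem_union, Finset.mem_image, Finset.mem_biUnion]
  exact Or.inr (Or.inl ⟨x, ⟨i, Finset.mem_univ i, hx⟩, rfl⟩)

theorem leaf_mem_verts (i : ι) : leaf i ∈ verts S := by
  simp [verts]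

theorem Arc.mem_verts {u v : CoverVertex α ι} (h : Arc S u v) :
    u ∈ verts S ∧ v ∈ verts S := by
  cases h with
  | root_elem i hx => exact ⟨Finset.mem_insert_self _ _, elem_mem_verts S hx⟩
  | root_leaf i => exact ⟨Finset.mem_insert_self _ _, leaf_mem_verts S i⟩
  | elem_leaf hx => exact ⟨elem_mem_verts S hx, leaf_mem_verts S _⟩

theorem arc_mem_arcs {u v : CoverVertex α ι} (h : Arc S u v) :
    (u, v) ∈ (verts S ×ˢ verts S).filter fun e => Arc S e.1 e.2 :=
  Finset.mem_filter.2 ⟨Finset.mem_product.2 (h.mem_verts S), h⟩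

theorem eq_root_or_arc_root_of_mem_verts {v : CoverVertex α ι} (hv : v ∈ verts S) :
    v = root ∨ Arc S root v := by
  simp only [verts, Finset.mem_insert, Finset.mem_union, Finset.mem_image,
    Finset.mem_biUnion] at hv
  rcases hv with rfl | ⟨x, ⟨i, -, hx⟩, rfl⟩ | ⟨i, -, rfl⟩
  · exact .inl rfl
  · exact .inr (.root_elem i hx)
  · exact .inr (.root_leaf i)

noncomputable def network : RWDigraph (CoverVertex α ι) where
  verts := verts S
  arcs := (verts S ×ˢ verts S).filter fun e => Arc S e.1 e.2
  root := root
  w := weight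
  w_nonneg e := by rcases weight_eq_zero_or_one e with h | h <;> simp [h]
  root_mem := Finset.mem_insert_self _ _
  arc_mem _ he := Finset.mem_product.1 (Finset.mem_filter.1 he).1
  acyclic := Relation.not_transGen_self_of_strictMono rank fun _ _ h =>
    (Finset.mem_filter.1 h).2.rank_lt
  reach v hv := by
    obtain rfl | h := eq_root_or_arc_root_of_mem_verts S hv
    · exact .refl
    · exact .single (arc_mem_arcs S h)

theorem network_arc_iff {u v : CoverVertex α ι} : (network S).Arc u v ↔ Arc S u v := by
  simp only [RWDigraph.Arc, network, Finset.mem_filter, Finset.mem_product, and_iff_right_iff_imp]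
  exact Arc.mem_verts S

theorem reflTransGen_elem_leaf_iff {x : α} {i : ι} :
    Relation.ReflTransGen (network S).Arc (elem x) (leaf i) ↔ x ∈ S i := by
  refine ⟨fun h => ?_, fun hx => .single ((network_arc_iff S).2 (.elem_leaf hx))⟩
  obtain ⟨v, hxv, hvi⟩ := h.cases_head.resolve_left nofun
  rw [network_arc_iff] at hxv
  cases hxv with
  | elem_leaf hxj =>
    obtain h | ⟨_, hj, _⟩ := hvi.cases_head
    · exact leaf.inj h ▸ hxj
    · exact absurd ((network_arc_iff S).1 hj) (not_arc_leaf _ _)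

theorem leaves_network [Nonempty ι] : (network S).leaves = Set.range leaf := by
  ext v
  simp only [RWDigraph.leaves, network_arc_iff, Set.mem_ofPred_eq, Set.mem_range]
  refine ⟨fun ⟨hv, hsink⟩ => ?_, ?_⟩
  · obtain rfl | h := eq_root_or_arc_root_of_mem_verts S hv
    · exact absurd (.root_leaf (Classical.arbitrary ι)) (hsink _)
    · cases h with
      | root_elem i hx => exact absurd (.elem_leaf hx) (hsink (leaf i))
      | root_leaf i => exact ⟨i, rfl⟩
  · rintro ⟨i, rfl⟩
    exact ⟨leaf_mem_verts S i, not_arc_leaf i⟩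

theorem allPathsPD_network_leaf [DecidableEq α] (I : Finset ι) :
    (network S).allPathsPD (leaf '' I) = (I.biUnion S).card := by
  have root_elem_mem_anc {x : α} :
      (root, elem x) ∈ (network S).anc (leaf '' I) ↔ x ∈ I.biUnion S := by
    simp only [RWDigraph.anc, network_arc_iff, Set.mem_ofPred_eq, Set.mem_image, Finset.mem_coe,
      Finset.mem_biUnion]
    constructor
    · rintro ⟨-, _, ⟨i, hi, rfl⟩, hreach⟩
      exact ⟨i, hi, (reflTransGen_elem_leaf_iff S).1 hreach⟩
    · rintro ⟨i, hi, hx⟩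
      exact ⟨.root_elem i hx, leaf i, ⟨i, hi, rfl⟩, (reflTransGen_elem_leaf_iff S).2 hx⟩
  have weighted_anc_subset : (I.biUnion S).image (fun x => (root, elem x)) ⊆
      (network S).arcs.filter (· ∈ (network S).anc (leaf '' I)) := by
    simp only [Finset.image_subset_iff, Finset.mem_filter]
    exact fun x hx => ⟨(root_elem_mem_anc.2 hx).1, root_elem_mem_anc.2 hx⟩
  have weight_eq_zero : ∀ e ∈ (network S).arcs.filter (· ∈ (network S).anc (leaf '' I)),
      e ∉ (I.biUnion S).image (fun x => (root, elem x)) → weight e = 0 := by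
    intro e he hne
    by_contra hw
    obtain ⟨x, rfl⟩ := exists_eq_root_elem_of_weight_ne_zero hw
    exact hne (Finset.mem_image_of_mem _ (root_elem_mem_anc.1 (Finset.mem_filter.1 he).2))
  change ∑ e ∈ _, weight e = _
  rw [← Finset.sum_subset weighted_anc_subset weight_eq_zero,
    Finset.sum_image fun _ _ _ _ h => elem.inj (Prod.ext_iff.1 h).2]
  simp [weight]

end CoverVertex

theorem maximum_coverage_network_general {α : Type} [DecidableEq α]
    (n : ℕ) (hn : 0 < n) (S : Fin n → Finset α) :
    ∃ (V : Type) (N : RWDigraph V) (v : Fin n → V),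
      Function.Injective v ∧
      N.leaves = Set.range v ∧
      (∀ e, N.w e = 0 ∨ N.w e = 1) ∧
      ∀ I : Finset (Fin n),
        N.allPathsPD (v '' ↑I) = ((I.biUnion S).card : ℝ) := by
  have := Fin.pos_iff_nonempty.1 hn
  exact ⟨CoverVertex α (Fin n), CoverVertex.network S, CoverVertex.leaf,
    fun _ _ => CoverVertex.leaf.inj, CoverVertex.leaves_network S,
    CoverVertex.weight_eq_zero_or_one, CoverVertex.allPathsPD_network_leaf S⟩

/-- for every finite set `E` and every finite family `S 0, …, S (n-1)`
of subsets of `E`, there is a rooted weighted digraph `N` with arc weights in `{0,1}`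
whose leaf set consists of `n` leaves `v 0, …, v (n-1)` such that for every index set
`I`, `AllPaths-PD_N({v i : i ∈ I}) = |⋃_{i ∈ I} S i|`. -/
theorem maximum_coverage_network {α : Type} [DecidableEq α]
    (E : Finset α) (n : ℕ) (hn : 0 < n) (S : Fin n → Finset α) (hSE : ∀ i, S i ⊆ E) :
    ∃ (V : Type) (N : RWDigraph V) (v : Fin n → V),
      Function.Injective v ∧
      N.leaves = Set.range v ∧
      (∀ e, N.w e = 0 ∨ N.w e = 1) ∧
      ∀ I : Finset (Fin n),
        N.allPathsPD (v '' ↑I) = ((I.biUnion S).card : ℝ) :=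
  maximum_coverage_network_general n hn S
end

section
/- Let N be a rooted weighted digraph with root ρ, leaf set X and weight function w, and let T_1 and T_2 be connecting subtrees for X in N equipped with weight functions w_1 and w_2 on the arcs of N that vanish on arcs outside T_1 and T_2, respectively. Suppose that (i) w_1(e) + w_2(e) = w(e) for every arc e of N, and (ii) for each i ∈ {1,2}, each arc e with w_i(e) > 0, and each leaf ℓ ∈ X, the arc e lies on a directed path from ρ to ℓ in N if and only if e lies on the (unique) directed path from ρ to ℓ in T_i. Then for every subset S ⊆ X, AllPaths-PD_N(S) = PD_{T_1}(S) + PD_{T_2}(S), where PD_{T_i}(S) is the sum of w_i(e) over all arcs e of T_i that lie on the path from ρ to some leaf in S. -/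
attribute [local instance] Classical.propDecidable

namespace RWDigraph

variable {V : Type}

/-- `v` is a vertex of the subgraph with arc set `T` rooted at `ρ`. -/
def inTree (T : Set (V × V)) (ρ : V) (v : V) : Prop :=
  v = ρ ∨ (∃ u, (u, v) ∈ T) ∨ (∃ u, (v, u) ∈ T)

/-- `T` is a connecting subtree for `S` in `N`: a subgraph of `N` that is an
arborescence rooted at the root of `N` whose set of sinks is exactly `S`. -/
structure IsConnectingSubtree (N : RWDigraph V) (T : Set (V × V)) (S : Set V) : Prop where
  subset : ∀ e ∈ T, e ∈ N.arcs
  unique_parent : ∀ u u' v : V, (u, v) ∈ T → (u', v) ∈ T → u = u'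
  root_no_parent : ∀ u, (u, N.root) ∉ T
  reach_root : ∀ v, inTree T N.root v →
    Relation.ReflTransGen (fun a b => (a, b) ∈ T) N.root v
  sinks : {v | inTree T N.root v ∧ ∀ u, (v, u) ∉ T} = S

/-- The total weight `∑_{e ∈ T} w(e)` of a subtree `T` of `N`. -/
noncomputable def subtreeWeight (N : RWDigraph V) (T : Set (V × V)) : ℝ :=
  ∑ e ∈ N.arcs.filter (fun e => e ∈ T), N.w e

/-- `MinWeightTree-PD_N(S)`: the minimum weight of a connecting subtree for `S` in `N`. -/
noncomputable def minWeightTreePD (N : RWDigraph V) (S : Set V) : ℝ :=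
  sInf {t : ℝ | ∃ T : Set (V × V), N.IsConnectingSubtree T S ∧ t = N.subtreeWeight T}

end RWDigraph

namespace RWDigraph

/-- `PD_{T}(S)` with weight function `wT`: the sum of `wT(e)` over all arcs `e` of the
subtree `T` that lie on the (unique) directed path in `T` from the root to some leaf
in `S`, i.e. over the arcs `e ∈ T` from whose head some leaf of `S` is `T`-reachable. -/
noncomputable def treePD {V : Type} (N : RWDigraph V) (T : Set (V × V))
    (wT : V × V → ℝ) (S : Set V) : ℝ :=
  ∑ e ∈ N.arcs.filter (fun e => e ∈ T ∧
      ∃ ℓ ∈ S, Relation.ReflTransGen (fun a b => (a, b) ∈ T) e.2 ℓ), wT e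

end RWDigraph

namespace RWDigraph

variable {V : Type} (N : RWDigraph V) {T : Set (V × V)} {wT : V × V → ℝ} {S : Set V}

/-- Condition (ii) of a weighted covering for a single tree `T` with weights `wT`. -/
def PathsAgreeOnSupport (T : Set (V × V)) (wT : V × V → ℝ) : Prop :=
  ∀ e ∈ N.arcs, 0 < wT e → ∀ ℓ ∈ N.leaves,
    (Relation.ReflTransGen N.Arc e.2 ℓ ↔
      (e ∈ T ∧ Relation.ReflTransGen (fun a b => (a, b) ∈ T) e.2 ℓ))

variable {N}

theorem mem_anc_iff_of_pos (hpath : N.PathsAgreeOnSupport T wT) (hS : S ⊆ N.leaves)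
    {e : V × V} (he : e ∈ N.arcs) (hpos : 0 < wT e) :
    e ∈ N.anc S ↔ e ∈ T ∧ ∃ ℓ ∈ S, Relation.ReflTransGen (fun a b => (a, b) ∈ T) e.2 ℓ := by
  constructor
  · rintro ⟨-, ℓ, hℓS, hreach⟩
    obtain ⟨heT, hreachT⟩ := (hpath e he hpos ℓ (hS hℓS)).mp hreach
    exact ⟨heT, ℓ, hℓS, hreachT⟩
  · rintro ⟨heT, ℓ, hℓS, hreachT⟩
    exact ⟨he, ℓ, hℓS, (hpath e he hpos ℓ (hS hℓS)).mpr ⟨heT, hreachT⟩⟩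

/-- The arcs counted by `N.anc S` and by `N.treePD T wT S` differ only where `wT` vanishes. -/
theorem sum_anc_eq_treePD (hnn : ∀ e, 0 ≤ wT e) (hpath : N.PathsAgreeOnSupport T wT)
    (hS : S ⊆ N.leaves) :
    ∑ e ∈ N.arcs.filter (· ∈ N.anc S), wT e = N.treePD T wT S := by
  rw [treePD, Finset.sum_filter, Finset.sum_filter]
  refine Finset.sum_congr rfl fun e he => ?_
  rcases (hnn e).lt_or_eq with hpos | hzero
  · rw [if_congr (mem_anc_iff_of_pos hpath hS he hpos) rfl rfl]
  · simp [← hzero]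

end RWDigraph

theorem allPathsPD_eq_weighted_covering_general {V : Type} (N : RWDigraph V)
    (T₁ T₂ : Set (V × V)) (w₁ w₂ : V × V → ℝ)
    (h₁nn : ∀ e, 0 ≤ w₁ e) (h₂nn : ∀ e, 0 ≤ w₂ e)
    (hsum : ∀ e ∈ N.arcs, w₁ e + w₂ e = N.w e)
    (hpath₁ : ∀ e ∈ N.arcs, 0 < w₁ e → ∀ ℓ ∈ N.leaves,
      (Relation.ReflTransGen N.Arc e.2 ℓ ↔
        (e ∈ T₁ ∧ Relation.ReflTransGen (fun a b => (a, b) ∈ T₁) e.2 ℓ)))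
    (hpath₂ : ∀ e ∈ N.arcs, 0 < w₂ e → ∀ ℓ ∈ N.leaves,
      (Relation.ReflTransGen N.Arc e.2 ℓ ↔
        (e ∈ T₂ ∧ Relation.ReflTransGen (fun a b => (a, b) ∈ T₂) e.2 ℓ)))
    (S : Set V) (hS : S ⊆ N.leaves) :
    N.allPathsPD S = N.treePD T₁ w₁ S + N.treePD T₂ w₂ S := by
  rw [← RWDigraph.sum_anc_eq_treePD h₁nn hpath₁ hS, ← RWDigraph.sum_anc_eq_treePD h₂nn hpath₂ hS,
    ← Finset.sum_add_distrib, RWDigraph.allPathsPD]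
  exact Finset.sum_congr rfl fun e he => (hsum e (Finset.mem_of_mem_filter e he)).symm

/-- if `T₁, T₂` are connecting subtrees for the leaf set `X` of `N`, with
non-negative weight functions `w₁, w₂` vanishing outside `T₁, T₂` respectively, such that
(i) `w₁(e) + w₂(e) = w(e)` for every arc `e` of `N`, and (ii) for each `i`, each arc `e`
with `wᵢ(e) > 0` and each leaf `ℓ`, `e` lies on a directed path from the root to `ℓ` in `N`
iff `e` lies on the unique path from the root to `ℓ` in `Tᵢ`, then for every `S ⊆ X`,
`AllPaths-PD_N(S) = PD_{T₁}(S) + PD_{T₂}(S)`. -/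
theorem allPathsPD_eq_weighted_covering {V : Type} (N : RWDigraph V)
    (T₁ T₂ : Set (V × V)) (w₁ w₂ : V × V → ℝ)
    (hT₁ : N.IsConnectingSubtree T₁ N.leaves) (hT₂ : N.IsConnectingSubtree T₂ N.leaves)
    (h₁nn : ∀ e, 0 ≤ w₁ e) (h₂nn : ∀ e, 0 ≤ w₂ e)
    (h₁van : ∀ e, e ∉ T₁ → w₁ e = 0) (h₂van : ∀ e, e ∉ T₂ → w₂ e = 0)
    (hsum : ∀ e ∈ N.arcs, w₁ e + w₂ e = N.w e)
    (hpath₁ : ∀ e ∈ N.arcs, 0 < w₁ e → ∀ ℓ ∈ N.leaves,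
      (Relation.ReflTransGen N.Arc e.2 ℓ ↔
        (e ∈ T₁ ∧ Relation.ReflTransGen (fun a b => (a, b) ∈ T₁) e.2 ℓ)))
    (hpath₂ : ∀ e ∈ N.arcs, 0 < w₂ e → ∀ ℓ ∈ N.leaves,
      (Relation.ReflTransGen N.Arc e.2 ℓ ↔
        (e ∈ T₂ ∧ Relation.ReflTransGen (fun a b => (a, b) ∈ T₂) e.2 ℓ)))
    (S : Set V) (hS : S ⊆ N.leaves) :
    N.allPathsPD S = N.treePD T₁ w₁ S + N.treePD T₂ w₂ S :=
  allPathsPD_eq_weighted_covering_general N T₁ T₂ w₁ w₂ h₁nn h₂nn hsum hpath₁ hpath₂ S hS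
end

section
/- Let X be a finite set with |X| = 3q for a positive integer q, and let C be a family of 3-element subsets of X. Then there exists a function f : X → C with x ∈ f(x) for every x ∈ X and with image of cardinality |f(X)| ≤ q, if and only if C contains an exact cover of X. -/
/-!
The image of a selector `f` is a subfamily of `C` covering `X` by at most `q` sets of size `3`.
As `|X| = 3q`, the union bound `|⋃ S| ≤ ∑ c ∈ S, |c|` is then an equality, which forces the sets
to be pairwise disjoint. Conversely, an exact cover of `X` by `3`-sets has exactly `q` members, and
sending each `x` to the member containing it is a selector.
-/

open Finset

namespace Finset

variable {α ι : Type*} [DecidableEq α]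

theorem pairwiseDisjoint_of_sum_card_le_card_biUnion {s : Finset ι} {t : ι → Finset α}
    (h : ∑ i ∈ s, #(t i) ≤ #(s.biUnion t)) : (s : Set ι).PairwiseDisjoint t := by
  classical
  intro i hi j hj hij
  by_contra hnd
  obtain ⟨x, hxi, hxj⟩ := not_disjoint_iff.1 hnd
  have hunion : s.biUnion t = (s.erase j).biUnion t ∪ t j := by
    rw [← insert_erase (mem_coe.1 hj), biUnion_insert, erase_insert (notMem_erase j s),
      union_comm]
  have hinter : 0 < #((s.erase j).biUnion t ∩ t j) :=
    card_pos.2 ⟨x, mem_inter.2 ⟨mem_biUnion.2 ⟨i, mem_erase.2 ⟨hij, hi⟩, hxi⟩, hxj⟩⟩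
  have hrest : #((s.erase j).biUnion t) ≤ ∑ i ∈ s.erase j, #(t i) := card_biUnion_le
  have hincl_excl := card_union_add_card_inter ((s.erase j).biUnion t) (t j)
  rw [← sum_erase_add _ _ (mem_coe.1 hj), hunion] at h
  omega

variable {X : Finset α} {S : Finset (Finset α)} {k : ℕ}

theorem card_eq_mul_card_of_pairwiseDisjoint (hS : ∀ c ∈ S, #c = k)
    (hdisj : (S : Set (Finset α)).PairwiseDisjoint id) (hcover : S.biUnion id = X) :
    #X = k * #S := by
  rw [← hcover, card_biUnion hdisj]
  exact (sum_const_nat hS).trans (mul_comm _ _)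

theorem pairwiseDisjoint_and_biUnion_eq_of_mul_card_le (hS : ∀ c ∈ S, #c = k)
    (hcover : X ⊆ S.biUnion id) (hcard : k * #S ≤ #X) :
    (S : Set (Finset α)).PairwiseDisjoint id ∧ S.biUnion id = X := by
  have hsum : ∑ c ∈ S, #(id c) = k * #S := (sum_const_nat hS).trans (mul_comm _ _)
  have hX : #X ≤ #(S.biUnion id) := card_le_card hcover
  have hunion : #(S.biUnion id) ≤ ∑ c ∈ S, #(id c) := card_biUnion_le
  exact ⟨pairwiseDisjoint_of_sum_card_le_card_biUnion (by omega),
    (eq_of_subset_of_card_le hcover (by omega)).symm⟩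

end Finset

section Selector

variable {α : Type*} [DecidableEq α] {X : Finset α} {C : Finset (Finset α)}

theorem exists_cover_of_selector (f : X → C) (hf : ∀ x : X, (x : α) ∈ (f x : Finset α)) :
    ∃ S ⊆ C, X ⊆ S.biUnion id ∧ #S ≤ #(univ.image f) := by
  refine ⟨(univ.image f).image Subtype.val, ?_, ?_, card_image_le⟩
  · intro c hc
    obtain ⟨d, -, rfl⟩ := mem_image.1 hc
    exact d.2
  · intro x hx
    exact mem_biUnion.2 ⟨f ⟨x, hx⟩, mem_image_of_mem _ (mem_image_of_mem _ (mem_univ _)),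
      hf ⟨x, hx⟩⟩

theorem exists_selector_of_cover {T : Finset (Finset α)} (hTC : T ⊆ C)
    (hcover : X ⊆ T.biUnion id) :
    ∃ f : X → C, (∀ x : X, (x : α) ∈ (f x : Finset α)) ∧ #(univ.image f) ≤ #T := by
  have hex (x : X) : ∃ c ∈ T, (x : α) ∈ c := by simpa using hcover x.2
  choose g hgT hxg using hex
  refine ⟨fun x => ⟨g x, hTC (hgT x)⟩, hxg, ?_⟩
  refine card_le_card_of_injOn Subtype.val ?_ Subtype.val_injective.injOn
  intro c hc
  obtain ⟨x, -, rfl⟩ := mem_image.1 (mem_coe.1 hc)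
  exact hgT x

end Selector

theorem selector_iff_exact_cover_three_general {α : Type*} [DecidableEq α]
    (q : ℕ) (X : Finset α) (hX : X.card = 3 * q)
    (C : Finset (Finset α)) (hC : ∀ c ∈ C, c ⊆ X ∧ c.card = 3) :
    (∃ f : X → C, (∀ x : X, (x : α) ∈ (f x : Finset α)) ∧
      (Finset.univ.image f).card ≤ q) ↔
    (∃ C'' ⊆ C, (C'' : Set (Finset α)).PairwiseDisjoint id ∧ C''.biUnion id = X) := by
  constructor
  · rintro ⟨f, hf, hcard⟩
    obtain ⟨S, hSC, hcover, hS⟩ := exists_cover_of_selector f hf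
    exact ⟨S, hSC, pairwiseDisjoint_and_biUnion_eq_of_mul_card_le
      (fun c hc => (hC c (hSC hc)).2) hcover (by omega)⟩
  · rintro ⟨C'', hC''C, hdisj, hcover⟩
    have hcard := card_eq_mul_card_of_pairwiseDisjoint (fun c hc => (hC c (hC''C hc)).2)
      hdisj hcover
    obtain ⟨f, hf, hf_card⟩ := exists_selector_of_cover hC''C hcover.ge
    exact ⟨f, hf, by omega⟩

/-- if `|X| = 3q` with `q ≥ 1` and `C` is a family of `3`-element subsets
of `X`, then there is a function `f : X → C` with `x ∈ f x` for every `x ∈ X` and whose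
image has cardinality at most `q`, if and only if `C` contains an exact cover of `X`. -/
theorem selector_iff_exact_cover_three {α : Type*} [DecidableEq α]
    (q : ℕ) (hq : 0 < q) (X : Finset α) (hX : X.card = 3 * q)
    (C : Finset (Finset α)) (hC : ∀ c ∈ C, c ⊆ X ∧ c.card = 3) :
    (∃ f : X → C, (∀ x : X, (x : α) ∈ (f x : Finset α)) ∧
      (Finset.univ.image f).card ≤ q) ↔
    (∃ C'' ⊆ C, (C'' : Set (Finset α)).PairwiseDisjoint id ∧ C''.biUnion id = X) :=
  selector_iff_exact_cover_three_general q X hX C hC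
end

section
/- Let N be a tree-child rooted binary phylogenetic network on X with non-negative arc weights w. Then every connecting subtree T for X in N contains every tree arc of N and, for each reticulation v of N, exactly one of the two reticulation arcs directed into v. -/
attribute [local instance] Classical.propDecidable

/-- A rooted binary phylogenetic network: a finite rooted DAG (without parallel arcs)
in which every vertex is reachable from the root, the root has in-degree 0 and
out-degree 2, every sink (leaf) has in-degree 1, and every other non-root vertex is
either a tree vertex (in-degree 1, out-degree 2) or a reticulation (in-degree 2,
out-degree 1); each arc carries a non-negative real weight. -/
structure PhyloNetwork (V : Type) where
  verts : Finset V
  arcs : Finset (V × V)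
  root : V
  w : V × V → ℝ
  w_nonneg : ∀ e, 0 ≤ w e
  root_mem : root ∈ verts
  arc_mem : ∀ e ∈ arcs, e.1 ∈ verts ∧ e.2 ∈ verts
  acyclic : ∀ v : V, ¬ Relation.TransGen (fun a b => (a, b) ∈ arcs) v v
  reach : ∀ v ∈ verts, Relation.ReflTransGen (fun a b => (a, b) ∈ arcs) root v
  root_indeg : ∀ u : V, (u, root) ∉ arcs
  root_outdeg : {u : V | (root, u) ∈ arcs}.ncard = 2
  leaf_indeg : ∀ v ∈ verts, (∀ u, (v, u) ∉ arcs) → {u : V | (u, v) ∈ arcs}.ncard = 1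
  internal_deg : ∀ v ∈ verts, v ≠ root → (∃ u, (v, u) ∈ arcs) →
    ({u : V | (u, v) ∈ arcs}.ncard = 1 ∧ {u : V | (v, u) ∈ arcs}.ncard = 2) ∨
    ({u : V | (u, v) ∈ arcs}.ncard = 2 ∧ {u : V | (v, u) ∈ arcs}.ncard = 1)

namespace PhyloNetwork

variable {V : Type}

/-- A reticulation: a vertex of in-degree two. -/
def isRet (N : PhyloNetwork V) (v : V) : Prop := {u : V | (u, v) ∈ N.arcs}.ncard = 2

/-- The leaf set `X` of the network: its sinks. -/
def leaves (N : PhyloNetwork V) : Set V := {v | v ∈ N.verts ∧ ∀ u, (v, u) ∉ N.arcs}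

/-- A tree arc: an arc whose head is not a reticulation. -/
def isTreeArc (N : PhyloNetwork V) (e : V × V) : Prop := e ∈ N.arcs ∧ ¬ N.isRet e.2

/-- Tree-child: every non-leaf vertex has a child that is a tree vertex or a leaf
(i.e. a child that is not a reticulation). -/
def TreeChild (N : PhyloNetwork V) : Prop :=
  ∀ v ∈ N.verts, (∃ u, (v, u) ∈ N.arcs) → ∃ u, (v, u) ∈ N.arcs ∧ ¬ N.isRet u

/-- `v` is a vertex of the subgraph with arc set `T` rooted at `ρ`. -/
def inTree (T : Set (V × V)) (ρ : V) (v : V) : Prop :=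
  v = ρ ∨ (∃ u, (u, v) ∈ T) ∨ (∃ u, (v, u) ∈ T)

/-- `T` is a connecting subtree for `S` in `N`: a subgraph of `N` that is an
arborescence rooted at the root of `N` whose set of sinks is exactly `S`. -/
structure IsConnectingSubtree (N : PhyloNetwork V) (T : Set (V × V)) (S : Set V) : Prop where
  subset : ∀ e ∈ T, e ∈ N.arcs
  unique_parent : ∀ u u' v : V, (u, v) ∈ T → (u', v) ∈ T → u = u'
  root_no_parent : ∀ u, (u, N.root) ∉ T
  reach_root : ∀ v, inTree T N.root v →
    Relation.ReflTransGen (fun a b => (a, b) ∈ T) N.root v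
  sinks : {v | inTree T N.root v ∧ ∀ u, (v, u) ∉ T} = S

/-- The total weight `∑_{e ∈ T} w(e)` of a subtree `T` of `N`. -/
noncomputable def subtreeWeight (N : PhyloNetwork V) (T : Set (V × V)) : ℝ :=
  ∑ e ∈ N.arcs.filter (fun e => e ∈ T), N.w e

end PhyloNetwork

/-!
Every vertex of a tree-child network lies in a connecting subtree `T` for its leaves. Leaves are the
sinks of `T`; a non-leaf vertex `v` has a child `u` that is not a reticulation, `u` lies in `T` by
induction along the (finite, acyclic) arc relation, and since `v` is the only parent of `u` in the
network, the parent of `u` in `T` is `v`. Once every vertex is in `T`, every non-root vertex has a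
parent in `T`: for the head of a tree arc that parent is forced, and for a reticulation it is unique
because `T` is an arborescence.
-/

theorem wellFounded_swap_of_acyclic {α : Type*} (E : Finset (α × α))
    (hE : ∀ v, ¬ Relation.TransGen (fun a b => (a, b) ∈ E) v v) :
    WellFounded (fun u v => (v, u) ∈ E) := by
  let descendants (v : α) : Set α := {x | Relation.TransGen (fun a b => (a, b) ∈ E) v x}
  have finite_descendants (v : α) : (descendants v).Finite := by
    refine (E.finite_toSet.image Prod.snd).subset fun x hx => ?_
    obtain ⟨c, -, hcx⟩ := Relation.TransGen.tail'_iff.mp hx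
    exact ⟨(c, x), hcx, rfl⟩
  refine Subrelation.wf (fun {u v} hvu => ?_) (measure fun v => (descendants v).ncard).wf
  refine Set.ncard_lt_ncard ⟨fun x hx => Relation.TransGen.head hvu hx, fun hsub => ?_⟩
    (finite_descendants v)
  exact hE u (hsub (Relation.TransGen.single hvu))

namespace PhyloNetwork

variable {V : Type} {N : PhyloNetwork V} {T : Set (V × V)} {S : Set V} {u v p : V}

theorem ne_root_of_mem_arcs (huv : (u, v) ∈ N.arcs) : v ≠ N.root :=
  fun h => N.root_indeg u (h ▸ huv)

theorem eq_of_mem_arcs_of_not_isRet (huv : (u, v) ∈ N.arcs) (hv : ¬ N.isRet v)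
    (hpv : (p, v) ∈ N.arcs) : p = u := by
  have hv_mem : v ∈ N.verts := (N.arc_mem _ huv).2
  have indeg_one : {x : V | (x, v) ∈ N.arcs}.ncard = 1 := by
    by_cases hleaf : ∀ x, (v, x) ∉ N.arcs
    · exact N.leaf_indeg v hv_mem hleaf
    · push Not at hleaf
      rcases N.internal_deg v hv_mem (ne_root_of_mem_arcs huv) hleaf with ⟨h, -⟩ | ⟨h, -⟩
      · exact h
      · exact absurd h hv
  obtain ⟨a, ha⟩ := Set.ncard_eq_one.mp indeg_one
  have hu : u ∈ ({a} : Set V) := ha ▸ huv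
  have hp : p ∈ ({a} : Set V) := ha ▸ hpv
  exact hp.trans hu.symm

namespace IsConnectingSubtree

theorem exists_parent (hT : N.IsConnectingSubtree T S) (hv : inTree T N.root v)
    (hne : v ≠ N.root) : ∃ p, (p, v) ∈ T := by
  rcases (hT.reach_root v hv).cases_tail with h | ⟨p, -, hp⟩
  · exact absurd h hne
  · exact ⟨p, hp⟩

theorem mem_of_not_isRet (hT : N.IsConnectingSubtree T S) (huv : (u, v) ∈ N.arcs)
    (hv : ¬ N.isRet v) (hvT : inTree T N.root v) : (u, v) ∈ T := by
  obtain ⟨p, hp⟩ := hT.exists_parent hvT (ne_root_of_mem_arcs huv)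
  rwa [← eq_of_mem_arcs_of_not_isRet huv hv (hT.subset _ hp)]

theorem inTree_of_treeChild (hT : N.IsConnectingSubtree T N.leaves) (hTC : N.TreeChild) :
    ∀ v ∈ N.verts, inTree T N.root v := by
  intro v
  induction v using (wellFounded_swap_of_acyclic N.arcs N.acyclic).induction with
  | _ v ih =>
    intro hv
    by_cases hleaf : ∀ u, (v, u) ∉ N.arcs
    · have hsink : v ∈ {x | inTree T N.root x ∧ ∀ u, (x, u) ∉ T} := hT.sinks ▸ ⟨hv, hleaf⟩
      exact hsink.1
    · push Not at hleaf
      obtain ⟨u, hvu, hu⟩ := hTC v hv hleaf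
      have huT : inTree T N.root u := ih u hvu (N.arc_mem _ hvu).2
      exact Or.inr (Or.inr ⟨u, hT.mem_of_not_isRet hvu hu huT⟩)

end IsConnectingSubtree

end PhyloNetwork

/-- in a tree-child rooted binary phylogenetic network `N`, every
connecting subtree `T` for the full leaf set `X` contains every tree arc of `N` and,
for each reticulation `v`, exactly one of the two reticulation arcs directed into `v`. -/
theorem treechild_connecting_subtree {V : Type} (N : PhyloNetwork V)
    (hTC : N.TreeChild) (T : Set (V × V)) (hT : N.IsConnectingSubtree T N.leaves) :
    (∀ e, N.isTreeArc e → e ∈ T) ∧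
    (∀ v : V, N.isRet v → ∃! u : V, (u, v) ∈ T) := by
  have allIn := hT.inTree_of_treeChild hTC
  constructor
  · rintro ⟨u, v⟩ ⟨huv, hv⟩
    exact hT.mem_of_not_isRet huv hv (allIn v (N.arc_mem _ huv).2)
  · intro v hv
    obtain ⟨u, huv⟩ : {u : V | (u, v) ∈ N.arcs}.Nonempty :=
      Set.nonempty_of_ncard_ne_zero (by rw [hv]; norm_num)
    obtain ⟨p, hp⟩ := hT.exists_parent (allIn v (N.arc_mem _ huv).2)
      (PhyloNetwork.ne_root_of_mem_arcs huv)
    exact ⟨p, hp, fun q hq => hT.unique_parent q p v hq hp⟩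
end

section
/- Let N be a rooted weighted digraph with root ρ, leaf set X and non-negative arc weights, and let (u,v) be an arc of N with weight w(u,v). Let N' be the rooted weighted digraph obtained from N by replacing (u,v) with two arcs (u,m) and (m,v), where m is a new vertex, assigning weights w(u,m) = 0 and w(m,v) = w(u,v), and adjoining a new leaf ℓ via a new arc (m,ℓ) of weight 0. Then for every non-empty subset S ⊆ X, the minimum weight of a connecting subtree for S in N' equals the minimum weight of a connecting subtree for S in N, i.e. MinWeightTree-PD_{N'}(S) = MinWeightTree-PD_N(S). -/
attribute [local instance] Classical.propDecidable

open RWDigraph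

/-!
A connecting subtree `T` of `N` becomes the subtree `subdivide u v T` of `N'` by replacing the
arc `(u, v)`, if it is used, with the path `u → m → v`; as `w(u, m) = 0` and `w(m, v) = w(u, v)`,
the weight is unchanged. Conversely, in a connecting subtree of `N'` whose sinks are old leaves,
neither `m` nor `ℓ` can be a sink: so the arc `(m, ℓ)` is never used and `(u, m)`, `(m, v)` are
used together, which makes every connecting subtree of `N'` of the form `subdivide u v T`. The two
minima are therefore infima of the same set of weights.
-/

namespace RWDigraph

variable {V : Type}

section Subdivision

variable {u v a b x ρ : V} {c d : Bool} {T : Set (V × V)}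

def subdivisionArcs [DecidableEq V] (A : Finset (V × V)) (u v : V) :
    Finset ((V ⊕ Bool) × (V ⊕ Bool)) :=
  (A.erase (u, v)).image (fun e => (Sum.inl e.1, Sum.inl e.2)) ∪
    {(Sum.inl u, Sum.inr true), (Sum.inr true, Sum.inl v), (Sum.inr true, Sum.inr false)}

section Arcs

variable [DecidableEq V] {A : Finset (V × V)}

@[simp]
lemma inl_inl_mem_subdivisionArcs :
    (Sum.inl a, Sum.inl b) ∈ subdivisionArcs A u v ↔ (a, b) ∈ A ∧ (a, b) ≠ (u, v) := by
  simp [subdivisionArcs, and_comm]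

@[simp]
lemma inl_inr_mem_subdivisionArcs :
    (Sum.inl a, Sum.inr c) ∈ subdivisionArcs A u v ↔ a = u ∧ c = true := by
  simp [subdivisionArcs]

@[simp]
lemma inr_inl_mem_subdivisionArcs :
    (Sum.inr c, Sum.inl b) ∈ subdivisionArcs A u v ↔ c = true ∧ b = v := by
  simp [subdivisionArcs]

@[simp]
lemma inr_inr_mem_subdivisionArcs :
    (Sum.inr c, Sum.inr d) ∈ subdivisionArcs A u v ↔ c = true ∧ d = false := by
  simp [subdivisionArcs]

end Arcs

def subdivide (u v : V) (T : Set (V × V)) : Set ((V ⊕ Bool) × (V ⊕ Bool))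
  | (.inl a, .inl b) => (a, b) ∈ T ∧ (a, b) ≠ (u, v)
  | (.inl a, .inr c) => a = u ∧ c = true ∧ (u, v) ∈ T
  | (.inr c, .inl b) => c = true ∧ b = v ∧ (u, v) ∈ T
  | (.inr _, .inr _) => False

@[simp]
lemma inl_inl_mem_subdivide :
    (Sum.inl a, Sum.inl b) ∈ subdivide u v T ↔ (a, b) ∈ T ∧ (a, b) ≠ (u, v) := Iff.rfl

@[simp]
lemma inl_inr_mem_subdivide :
    (Sum.inl a, Sum.inr c) ∈ subdivide u v T ↔ a = u ∧ c = true ∧ (u, v) ∈ T := Iff.rfl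

@[simp]
lemma inr_inl_mem_subdivide :
    (Sum.inr c, Sum.inl b) ∈ subdivide u v T ↔ c = true ∧ b = v ∧ (u, v) ∈ T := Iff.rfl

@[simp]
lemma inr_inr_notMem_subdivide : (Sum.inr c, Sum.inr d) ∉ subdivide u v T := id

lemma subdivide_subset_subdivisionArcs [DecidableEq V] {A : Finset (V × V)}
    (hT : T ⊆ A) : subdivide u v T ⊆ subdivisionArcs A u v := by
  rintro ⟨a | c, b | d⟩ h
  · exact inl_inl_mem_subdivisionArcs.2 ⟨hT h.1, h.2⟩
  · exact inl_inr_mem_subdivisionArcs.2 ⟨h.1, h.2.1⟩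
  · exact inr_inl_mem_subdivisionArcs.2 ⟨h.1, h.2.1⟩
  · exact h.elim

lemma exists_subdivide_parent_inl_iff :
    (∃ p, (p, Sum.inl x) ∈ subdivide u v T) ↔ ∃ a, (a, x) ∈ T := by
  refine ⟨?_, fun ⟨a, ha⟩ => ?_⟩
  · rintro ⟨a | c, h⟩
    exacts [⟨a, h.1⟩, ⟨u, h.2.1 ▸ h.2.2⟩]
  · by_cases hax : (a, x) = (u, v)
    · obtain ⟨rfl, rfl⟩ := Prod.mk.inj hax
      exact ⟨.inr true, rfl, rfl, ha⟩
    · exact ⟨.inl a, ha, hax⟩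

lemma exists_subdivide_child_inl_iff :
    (∃ q, (Sum.inl x, q) ∈ subdivide u v T) ↔ ∃ b, (x, b) ∈ T := by
  refine ⟨?_, fun ⟨b, hb⟩ => ?_⟩
  · rintro ⟨b | c, h⟩
    exacts [⟨b, h.1⟩, ⟨v, h.1 ▸ h.2.2⟩]
  · by_cases hxb : (x, b) = (u, v)
    · obtain ⟨rfl, rfl⟩ := Prod.mk.inj hxb
      exact ⟨.inr true, rfl, rfl, hb⟩
    · exact ⟨.inl b, hb, hxb⟩

lemma inTree_subdivide_inl_iff :
    inTree (subdivide u v T) (.inl ρ) (.inl x) ↔ inTree T ρ x := by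
  simp only [inTree, Sum.inl.injEq, exists_subdivide_parent_inl_iff, exists_subdivide_child_inl_iff]

lemma inTree_subdivide_inr_iff :
    inTree (subdivide u v T) (.inl ρ) (.inr c) ↔ c = true ∧ (u, v) ∈ T := by
  simp [inTree, Sum.exists]

open Relation in
lemma reflTransGen_subdivide_inl_iff :
    ReflTransGen (fun p q => (p, q) ∈ subdivide u v T) (.inl a) (.inl b) ↔
      ReflTransGen (fun a b => (a, b) ∈ T) a b := by
  constructor
  · intro h
    -- contract `m` onto `u`
    refine h.lift' (Sum.elim id fun _ => u) ?_
    rintro (a | c) (b | d) h <;> simp only [inl_inl_mem_subdivide, inl_inr_mem_subdivide,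
      inr_inl_mem_subdivide, inr_inr_notMem_subdivide] at h
    · exact .single h.1
    · exact h.1 ▸ .refl
    · exact h.2.1 ▸ .single h.2.2
  · intro h
    refine h.lift' Sum.inl fun a b hab => ?_
    by_cases hab' : (a, b) = (u, v)
    · obtain ⟨rfl, rfl⟩ := Prod.mk.inj hab'
      exact .tail (.single (inl_inr_mem_subdivide.2 ⟨rfl, rfl, hab⟩))
        (inr_inl_mem_subdivide.2 ⟨rfl, rfl, hab⟩)
    · exact .single ⟨hab, hab'⟩

lemma subdivide_unique_parent_iff :
    (∀ p p' q, (p, q) ∈ subdivide u v T → (p', q) ∈ subdivide u v T → p = p') ↔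
      ∀ a a' b, (a, b) ∈ T → (a', b) ∈ T → a = a' := by
  constructor
  · intro h a a' b ha ha'
    by_cases hab : (a, b) = (u, v) <;> by_cases hab' : (a', b) = (u, v)
    · exact (Prod.mk.inj hab).1.trans (Prod.mk.inj hab').1.symm
    · obtain ⟨rfl, rfl⟩ := Prod.mk.inj hab
      exact absurd (h (.inr true) (.inl a') (.inl b) (inr_inl_mem_subdivide.2 ⟨rfl, rfl, ha⟩)
        ⟨ha', hab'⟩) Sum.inr_ne_inl
    · obtain ⟨rfl, rfl⟩ := Prod.mk.inj hab'
      exact absurd (h (.inl a) (.inr true) (.inl b) ⟨ha, hab⟩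
        (inr_inl_mem_subdivide.2 ⟨rfl, rfl, ha'⟩)) Sum.inl_ne_inr
    · exact Sum.inl_injective (h (.inl a) (.inl a') (.inl b) ⟨ha, hab⟩ ⟨ha', hab'⟩)
  · intro h p p' q hp hp'
    rcases p with a | c <;> rcases p' with a' | c' <;> rcases q with b | d <;>
      simp only [inl_inl_mem_subdivide, inl_inr_mem_subdivide, inr_inl_mem_subdivide,
        inr_inr_notMem_subdivide, ne_eq, Prod.mk.injEq, Sum.inl.injEq, reduceCtorEq] at hp hp' ⊢ <;>
      grind

lemma subdivide_no_parent_inl_iff :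
    (∀ p, (p, Sum.inl x) ∉ subdivide u v T) ↔ ∀ a, (a, x) ∉ T := by
  simp only [← not_exists, exists_subdivide_parent_inl_iff]

lemma subdivide_reach_iff :
    (∀ q, inTree (subdivide u v T) (.inl ρ) q →
        Relation.ReflTransGen (fun p q => (p, q) ∈ subdivide u v T) (.inl ρ) q) ↔
      ∀ x, inTree T ρ x → Relation.ReflTransGen (fun a b => (a, b) ∈ T) ρ x := by
  constructor
  · intro h x hx
    exact reflTransGen_subdivide_inl_iff.1 (h _ (inTree_subdivide_inl_iff.2 hx))
  · rintro h (x | c) hq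
    · exact reflTransGen_subdivide_inl_iff.2 (h x (inTree_subdivide_inl_iff.1 hq))
    · obtain ⟨rfl, huv⟩ := inTree_subdivide_inr_iff.1 hq
      exact (reflTransGen_subdivide_inl_iff.2 (h u (Or.inr (Or.inr ⟨v, huv⟩)))).tail
        (inl_inr_mem_subdivide.2 ⟨rfl, rfl, huv⟩)

lemma subdivide_sinks :
    {q | inTree (subdivide u v T) (.inl ρ) q ∧ ∀ r, (q, r) ∉ subdivide u v T} =
      Sum.inl '' {x | inTree T ρ x ∧ ∀ y, (x, y) ∉ T} := by
  ext (x | c)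
  · simp only [Set.mem_ofPred_eq, Sum.inl_injective.mem_set_image, inTree_subdivide_inl_iff,
      ← not_exists, exists_subdivide_child_inl_iff]
  · simp only [Set.mem_ofPred_eq, inTree_subdivide_inr_iff, Set.mem_image, reduceCtorEq,
      and_false, exists_false, iff_false, not_and]
    rintro ⟨rfl, huv⟩
    exact fun h => h (.inl v) ⟨rfl, rfl, huv⟩

theorem isConnectingSubtree_subdivide_iff [DecidableEq V] {N : RWDigraph V}
    {N' : RWDigraph (V ⊕ Bool)} (hroot : N'.root = .inl N.root)
    (harcs : N'.arcs = subdivisionArcs N.arcs u v) (hT : T ⊆ N.arcs) {S : Set V} :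
    N'.IsConnectingSubtree (subdivide u v T) (Sum.inl '' S) ↔ N.IsConnectingSubtree T S := by
  have hsinks : {q | inTree (subdivide u v T) N'.root q ∧ ∀ r, (q, r) ∉ subdivide u v T} =
      Sum.inl '' S ↔ {x | inTree T N.root x ∧ ∀ y, (x, y) ∉ T} = S := by
    rw [hroot, subdivide_sinks]
    exact (Set.image_injective.2 Sum.inl_injective).eq_iff
  constructor
  · intro h
    exact ⟨hT, subdivide_unique_parent_iff.1 h.unique_parent,
      subdivide_no_parent_inl_iff.1 (hroot ▸ h.root_no_parent),
      subdivide_reach_iff.1 (hroot ▸ h.reach_root), hsinks.1 h.sinks⟩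
  · intro h
    refine ⟨fun e he => harcs ▸ subdivide_subset_subdivisionArcs hT he,
      subdivide_unique_parent_iff.2 h.unique_parent, ?_, ?_, hsinks.2 h.sinks⟩
    · exact hroot ▸ subdivide_no_parent_inl_iff.2 h.root_no_parent
    · exact hroot ▸ subdivide_reach_iff.2 h.reach_root

end Subdivision

namespace IsConnectingSubtree

variable {N : RWDigraph V} {T : Set (V × V)} {S : Set V} {x : V}

lemma exists_child (hT : N.IsConnectingSubtree T S) (hx : inTree T N.root x) (hxS : x ∉ S) :
    ∃ y, (x, y) ∈ T := by
  by_contra! h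
  exact hxS (hT.sinks ▸ ⟨hx, h⟩)

lemma exists_parent (hT : N.IsConnectingSubtree T S) (hx : inTree T N.root x)
    (hne : x ≠ N.root) : ∃ p, (p, x) ∈ T := by
  obtain rfl | ⟨p, -, hp⟩ := (hT.reach_root x hx).cases_tail
  exacts [(hne rfl).elim, ⟨p, hp⟩]

variable [DecidableEq V] {N' : RWDigraph (V ⊕ Bool)} {u v : V}
  {T' : Set ((V ⊕ Bool) × (V ⊕ Bool))}

lemma inr_inr_notMem (harcs : N'.arcs = subdivisionArcs N.arcs u v)
    (hT' : N'.IsConnectingSubtree T' (Sum.inl '' S)) {c d : Bool} :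
    (Sum.inr c, Sum.inr d) ∉ T' := by
  intro h
  obtain ⟨-, rfl⟩ := inr_inr_mem_subdivisionArcs.1 (harcs ▸ hT'.subset _ h)
  obtain ⟨q, hq⟩ := hT'.exists_child (Or.inr (Or.inl ⟨_, h⟩)) (by simp)
  have hq' := harcs ▸ hT'.subset _ hq
  rcases q with b | e <;> simp at hq'

lemma inl_inr_mem_iff_inr_inl_mem (hroot : N'.root = .inl N.root)
    (harcs : N'.arcs = subdivisionArcs N.arcs u v)
    (hT' : N'.IsConnectingSubtree T' (Sum.inl '' S)) :
    (Sum.inl u, Sum.inr true) ∈ T' ↔ (Sum.inr true, Sum.inl v) ∈ T' := by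
  have hsub : ∀ e ∈ T', e ∈ subdivisionArcs N.arcs u v := fun e he => harcs ▸ hT'.subset e he
  constructor
  · intro h
    obtain ⟨b | e, hq⟩ := hT'.exists_child (Or.inr (Or.inl ⟨_, h⟩)) (by simp)
    · obtain ⟨-, rfl⟩ := inr_inl_mem_subdivisionArcs.1 (hsub _ hq)
      exact hq
    · exact (hT'.inr_inr_notMem harcs hq).elim
  · intro h
    obtain ⟨a | c, hp⟩ := hT'.exists_parent (Or.inr (Or.inr ⟨_, h⟩)) (by simp [hroot])
    · obtain ⟨rfl, -⟩ := inl_inr_mem_subdivisionArcs.1 (hsub _ hp)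
      exact hp
    · exact (hT'.inr_inr_notMem harcs hp).elim

lemma exists_eq_subdivide (huv : (u, v) ∈ N.arcs) (hroot : N'.root = .inl N.root)
    (harcs : N'.arcs = subdivisionArcs N.arcs u v)
    (hT' : N'.IsConnectingSubtree T' (Sum.inl '' S)) :
    ∃ T ⊆ (N.arcs : Set (V × V)), subdivide u v T = T' := by
  have hsub : ∀ e ∈ T', e ∈ subdivisionArcs N.arcs u v := fun e he => harcs ▸ hT'.subset e he
  have hm := hT'.inl_inr_mem_iff_inr_inl_mem hroot harcs
  have hm' : (Sum.inl u, Sum.inl v) ∉ T' := fun h => by simpa using hsub _ h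
  refine ⟨{e | (Sum.inl e.1, Sum.inl e.2) ∈ T' ∨ (e = (u, v) ∧ (Sum.inr true, Sum.inl v) ∈ T')},
    ?_, ?_⟩
  · rintro ⟨a, b⟩ (h | ⟨h, -⟩)
    exacts [(inl_inl_mem_subdivisionArcs.1 (hsub _ h)).1, h ▸ huv]
  ext ⟨a | c, b | d⟩
  · have := hsub (.inl a, .inl b)
    simp only [inl_inl_mem_subdivide, inl_inl_mem_subdivisionArcs, Set.mem_ofPred_eq] at this ⊢
    grind
  · have := hsub (.inl a, .inr d)
    simp only [inl_inr_mem_subdivide, inl_inr_mem_subdivisionArcs, Set.mem_ofPred_eq] at this ⊢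
    grind
  · have := hsub (.inr c, .inl b)
    simp only [inr_inl_mem_subdivide, inr_inl_mem_subdivisionArcs, Set.mem_ofPred_eq] at this ⊢
    grind
  · simpa using hT'.inr_inr_notMem harcs

end IsConnectingSubtree

lemma subtreeWeight_subdivide [DecidableEq V] {N : RWDigraph V} {N' : RWDigraph (V ⊕ Bool)}
    {u v : V} (huv : (u, v) ∈ N.arcs) (harcs : N'.arcs = subdivisionArcs N.arcs u v)
    (hw_old : ∀ a b : V, N'.w (Sum.inl a, Sum.inl b) = N.w (a, b))
    (hw_um : N'.w (Sum.inl u, Sum.inr true) = 0)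
    (hw_mv : N'.w (Sum.inr true, Sum.inl v) = N.w (u, v)) (T : Set (V × V)) :
    N'.subtreeWeight (subdivide u v T) = N.subtreeWeight T := by
  have hdisj : Disjoint ((N.arcs.erase (u, v)).image fun e => (Sum.inl e.1, Sum.inl e.2))
      {(Sum.inl u, Sum.inr true), (Sum.inr true, Sum.inl v), (Sum.inr true, Sum.inr false)} := by
    simp [Finset.disjoint_left]
  simp only [subtreeWeight, Finset.sum_filter, harcs, subdivisionArcs]
  rw [Finset.sum_union hdisj, Finset.sum_image fun x _ y _ h => by simpa [Prod.ext_iff] using h,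
    ← Finset.sum_erase_add _ _ huv]
  congr 1
  · refine Finset.sum_congr rfl fun e he => ?_
    simp [Finset.ne_of_mem_erase he, hw_old]
  · simp [hw_um, hw_mv]

lemma minWeightTreePD_eq_of_surjOn {W : Type} {N : RWDigraph V} {N' : RWDigraph W} {S : Set V}
    {S' : Set W} (f : Set (V × V) → Set (W × W))
    (hmaps : Set.MapsTo f {T | N.IsConnectingSubtree T S} {T' | N'.IsConnectingSubtree T' S'})
    (hsurj : Set.SurjOn f {T | N.IsConnectingSubtree T S} {T' | N'.IsConnectingSubtree T' S'})
    (hweight : ∀ T, N.IsConnectingSubtree T S → N'.subtreeWeight (f T) = N.subtreeWeight T) :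
    N'.minWeightTreePD S' = N.minWeightTreePD S := by
  unfold minWeightTreePD
  congr 1
  ext t
  constructor
  · rintro ⟨T', hT', rfl⟩
    obtain ⟨T, hT, rfl⟩ := hsurj hT'
    exact ⟨T, hT, hweight T hT⟩
  · rintro ⟨T, hT, rfl⟩
    exact ⟨f T, hmaps hT, (hweight T hT).symm⟩

end RWDigraph

/-- The subdivision vertex `m` is `Sum.inr true` and the new leaf `ℓ` is `Sum.inr false`. -/
theorem minWeightTreePD_subdivide_general {V : Type} [DecidableEq V]
    (N : RWDigraph V) (u v : V) (huv : (u, v) ∈ N.arcs)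
    (N' : RWDigraph (V ⊕ Bool))
    (hroot : N'.root = Sum.inl N.root)
    (harcs : N'.arcs =
      (N.arcs.erase (u, v)).image (fun e => (Sum.inl e.1, Sum.inl e.2)) ∪
        {(Sum.inl u, Sum.inr true), (Sum.inr true, Sum.inl v),
          (Sum.inr true, Sum.inr false)})
    (hw_old : ∀ a b : V, N'.w (Sum.inl a, Sum.inl b) = N.w (a, b))
    (hw_um : N'.w (Sum.inl u, Sum.inr true) = 0)
    (hw_mv : N'.w (Sum.inr true, Sum.inl v) = N.w (u, v))
    (S : Set V) :
    N'.minWeightTreePD (Sum.inl '' S) = N.minWeightTreePD S := by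
  refine minWeightTreePD_eq_of_surjOn (subdivide u v)
    (fun T hT => (isConnectingSubtree_subdivide_iff hroot harcs hT.subset).2 hT)
    (fun T' hT' => ?_) (fun T _ => subtreeWeight_subdivide huv harcs hw_old hw_um hw_mv T)
  obtain ⟨T, hTA, rfl⟩ := IsConnectingSubtree.exists_eq_subdivide huv hroot harcs hT'
  exact ⟨T, (isConnectingSubtree_subdivide_iff hroot harcs hTA).1 hT', rfl⟩

/-- subdividing an arc `(u,v)` of `N` into `(u,m), (m,v)` with weights
`0` and `w(u,v)`, and attaching a new leaf `ℓ` to `m` by an arc of weight `0`, does not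
change the minimum weight of a connecting subtree for any non-empty subset `S` of the
leaf set of `N`. Here `m = Sum.inr true` and `ℓ = Sum.inr false`. -/
theorem minWeightTreePD_subdivide {V : Type} [DecidableEq V]
    (N : RWDigraph V) (u v : V) (huv : (u, v) ∈ N.arcs)
    (N' : RWDigraph (V ⊕ Bool))
    (hroot : N'.root = Sum.inl N.root)
    (hverts : N'.verts =
      N.verts.image Sum.inl ∪ {Sum.inr true, Sum.inr false})
    (harcs : N'.arcs =
      (N.arcs.erase (u, v)).image (fun e => (Sum.inl e.1, Sum.inl e.2)) ∪
        {(Sum.inl u, Sum.inr true), (Sum.inr true, Sum.inl v),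
          (Sum.inr true, Sum.inr false)})
    (hw_old : ∀ a b : V, N'.w (Sum.inl a, Sum.inl b) = N.w (a, b))
    (hw_um : N'.w (Sum.inl u, Sum.inr true) = 0)
    (hw_mv : N'.w (Sum.inr true, Sum.inl v) = N.w (u, v))
    (hw_ml : N'.w (Sum.inr true, Sum.inr false) = 0)
    (S : Set V) (hS : S ⊆ N.leaves) (hSne : S.Nonempty) :
    N'.minWeightTreePD (Sum.inl '' S) = N.minWeightTreePD S :=
  minWeightTreePD_subdivide_general N u v huv N' hroot harcs hw_old hw_um hw_mv S
end

section
/- Let N be a rooted weighted digraph with root ρ, leaf set X and non-negative arc weights, let x ∈ X be a leaf whose unique incoming arc is e = (p, x) with weight w(e), and let r ≥ 1. Let N' be the rooted weighted digraph obtained from N by replacing e with a directed path p = m_0 → m_1 → ⋯ → m_r → x in which the final arc (m_r, x) has weight w(e) and all other arcs of the path have weight 0, and adjoining to each vertex m_j (1 ≤ j ≤ r) a new leaf ℓ_j via a new arc (m_j, ℓ_j) of weight 0, so that the leaf set of N' is X' = X ∪ {ℓ_1, …, ℓ_r}. Then the maximum of MinWeightTree-PD_{N'}(S') over all subsets S'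 ⊆ X' with |S'| = |X| equals MinWeightTree-PD_N(X). -/
attribute [local instance] Classical.propDecidable

namespace RWDigraph

/-- The arc relation of the digraph `N'` obtained from `N` by replacing the pendant arc
`(p, x)` by the directed path `p → m 0 → m 1 → ⋯ → m (r-1) → x` (where
`m j = Sum.inr (Sum.inl j)` plays the role of `m_{j+1}`), and adjoining to each `m j` a
new leaf `ℓ j = Sum.inr (Sum.inr j)` via a new arc `(m j, ℓ j)`. -/
def subdivArc {V : Type} (N : RWDigraph V) (p x : V) (r : ℕ) :
    (V ⊕ Fin r ⊕ Fin r) → (V ⊕ Fin r ⊕ Fin r) → Prop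
  | Sum.inl a, Sum.inl b => (a, b) ∈ N.arcs ∧ ¬(a = p ∧ b = x)
  | Sum.inl a, Sum.inr (Sum.inl j) => a = p ∧ (j : ℕ) = 0
  | Sum.inr (Sum.inl j), Sum.inl b => b = x ∧ (j : ℕ) = r - 1
  | Sum.inr (Sum.inl j), Sum.inr (Sum.inl j') => (j' : ℕ) = (j : ℕ) + 1
  | Sum.inr (Sum.inl j), Sum.inr (Sum.inr j') => j' = j
  | _, _ => False

/-- The weight function of the digraph `N'` described in `subdivArc`: arcs inherited
from `N` keep their weight, the final arc `(m (r-1), x)` of the subdividing path gets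
the weight of the original pendant arc `(p, x)`, and all other new arcs get weight `0`. -/
def subdivW {V : Type} (N : RWDigraph V) (p x : V) (r : ℕ) :
    (V ⊕ Fin r ⊕ Fin r) × (V ⊕ Fin r ⊕ Fin r) → ℝ
  | (Sum.inl a, Sum.inl b) => N.w (a, b)
  | (Sum.inr (Sum.inl _), Sum.inl _) => N.w (p, x)
  | _ => 0

end RWDigraph

/-!
A connecting subtree of `N` for a set of leaves containing `x` lifts to `N'` with the same
weight: route `(p, x)` along the new path and hang all new leaves on it. Conversely, collapsing
the new path onto `(p, x)` turns a connecting subtree of `N'` for the old leaves into one of `N`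
of the same weight, so `S' = X` attains `MinWeightTree-PD_N(X)`. For any other `S'`, prune the
lift of an optimal tree for `X`, whose sinks are all the leaves of `N'`, down to `S'`; as
weights are non-negative, this does not increase the weight.
-/

namespace RWDigraph

variable {V : Type}

section General

variable (N : RWDigraph V)

lemma ne_root_of_mem_arcs {u v : V} (huv : (u, v) ∈ N.arcs) : v ≠ N.root := by
  rintro rfl
  exact N.acyclic _ (Relation.TransGen.head' huv (N.reach u (N.arc_mem _ huv).1))

lemma finite_leaves : N.leaves.Finite :=
  N.verts.finite_toSet.subset fun _ hv => hv.1

/-- The head of an arc has strictly more ancestors than its tail, by acyclicity. -/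
lemma wellFounded_arc : WellFounded fun a b => (a, b) ∈ N.arcs := by
  let ancestors : V → Finset V := fun v =>
    N.verts.filter fun u => Relation.TransGen (fun a b => (a, b) ∈ N.arcs) u v
  refine Subrelation.wf (r := InvImage (· < ·) fun v => (ancestors v).card) ?_
    (InvImage.wf _ wellFounded_lt)
  intro a b hab
  refine Finset.card_lt_card (Finset.ssubset_iff_of_subset ?_ |>.2 ⟨a, ?_, ?_⟩)
  · intro u hu
    simp only [ancestors, Finset.mem_filter] at hu ⊢
    exact ⟨hu.1, hu.2.tail hab⟩
  · simp only [ancestors, Finset.mem_filter]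
    exact ⟨(N.arc_mem _ hab).1, .single hab⟩
  · simp only [ancestors, Finset.mem_filter, not_and]
    exact fun _ => N.acyclic a

lemma subtreeWeight_nonneg (T : Set (V × V)) : 0 ≤ N.subtreeWeight T :=
  Finset.sum_nonneg fun e _ => N.w_nonneg e

lemma subtreeWeight_mono {T T' : Set (V × V)} (h : T' ⊆ T) :
    N.subtreeWeight T' ≤ N.subtreeWeight T :=
  Finset.sum_le_sum_of_subset_of_nonneg (Finset.monotone_filter_right _ fun _ _ he => h he)
    fun e _ _ => N.w_nonneg e

lemma inTree_of_reflTransGen {T : Set (V × V)} {ρ v : V}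
    (hv : Relation.ReflTransGen (fun a b => (a, b) ∈ T) ρ v) : inTree T ρ v := by
  rcases hv.cases_tail with rfl | ⟨u, -, huv⟩
  · exact .inl rfl
  · exact .inr (.inl ⟨u, huv⟩)

variable {N}

lemma IsConnectingSubtree.mem_iff {T : Set (V × V)} {S : Set V}
    (hT : N.IsConnectingSubtree T S) {v : V} :
    v ∈ S ↔ inTree T N.root v ∧ ∀ u, (v, u) ∉ T := by
  rw [← hT.sinks]; rfl

lemma IsConnectingSubtree.mem_of_unique_parent {T : Set (V × V)} {S : Set V}
    (hT : N.IsConnectingSubtree T S) {u v : V} (hv : v ∈ S) (huv : (u, v) ∈ N.arcs)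
    (hunique : ∀ q, (q, v) ∈ N.arcs → q = u) : (u, v) ∈ T := by
  obtain ⟨rfl | ⟨q, hqv⟩ | ⟨q, hvq⟩, hout⟩ := hT.mem_iff.1 hv
  · exact absurd rfl (N.ne_root_of_mem_arcs huv)
  · rwa [← hunique q (hT.subset _ hqv)]
  · exact absurd hvq (hout q)

/-- Arcs into the root are impossible, and it suffices to reach the heads of arcs: the tail
of an arc is reached along the path to its head, whose last arc is the unique one into it. -/
lemma isConnectingSubtree_of {T : Set (V × V)} {S : Set V}
    (hsub : ∀ e ∈ T, e ∈ N.arcs)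
    (hpar : ∀ u u' v, (u, v) ∈ T → (u', v) ∈ T → u = u')
    (hhead : ∀ u v, (u, v) ∈ T → Relation.ReflTransGen (fun a b => (a, b) ∈ T) N.root v)
    (hsinks : {v | inTree T N.root v ∧ ∀ u, (v, u) ∉ T} = S) :
    N.IsConnectingSubtree T S where
  subset := hsub
  unique_parent := hpar
  root_no_parent u hu := N.ne_root_of_mem_arcs (hsub _ hu) rfl
  reach_root := by
    rintro v (rfl | ⟨u, hu⟩ | ⟨u, hu⟩)
    · exact .refl
    · exact hhead u v hu
    · rcases (hhead v u hu).cases_tail with hroot | ⟨c, hc, hcu⟩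
      · exact absurd hroot (N.ne_root_of_mem_arcs (hsub _ hu))
      · rwa [hpar v c u hu hcu]
  sinks := hsinks

lemma IsConnectingSubtree.exists_subset {T : Set (V × V)} {X S : Set V}
    (hT : N.IsConnectingSubtree T X) (hSX : S ⊆ X) (hS : S.Nonempty) :
    ∃ T' ⊆ T, N.IsConnectingSubtree T' S := by
  let R := fun a b => (a, b) ∈ T
  set T' : Set (V × V) := {e | e ∈ T ∧ ∃ ℓ ∈ S, Relation.ReflTransGen R e.2 ℓ}
  have hT'T : T' ⊆ T := fun e he => he.1
  have to_S : ∀ v, Relation.ReflTransGen R N.root v →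
      (∃ ℓ ∈ S, Relation.ReflTransGen R v ℓ) →
      Relation.ReflTransGen (fun a b => (a, b) ∈ T') N.root v := by
    intro v hv
    induction hv with
    | refl => exact fun _ => .refl
    | tail _ hbc ih =>
      rintro ⟨ℓ, hℓ, hcℓ⟩
      exact (ih ⟨ℓ, hℓ, .head hbc hcℓ⟩).tail ⟨hbc, ℓ, hℓ, hcℓ⟩
  have mem_of_reach : ∀ v ℓ, ℓ ∈ S → Relation.ReflTransGen R v ℓ →
      (∀ u, (v, u) ∉ T') → v ∈ S := by
    intro v ℓ hℓ hvℓ hout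
    rcases hvℓ.cases_head with rfl | ⟨c, hvc, hcℓ⟩
    · exact hℓ
    · exact absurd ⟨hvc, ℓ, hℓ, hcℓ⟩ (hout c)
  refine ⟨T', hT'T, isConnectingSubtree_of (fun e he => hT.subset e he.1)
    (fun u u' v hu hu' => hT.unique_parent u u' v hu.1 hu'.1) ?_ ?_⟩
  · rintro u v ⟨huv, hS'⟩
    exact to_S v (hT.reach_root v (.inr (.inl ⟨u, huv⟩))) hS'
  · ext v
    constructor
    · rintro ⟨rfl | ⟨u, hu⟩ | ⟨u, hu⟩, hout⟩
      · obtain ⟨ℓ, hℓ⟩ := hS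
        exact mem_of_reach _ ℓ hℓ (hT.reach_root ℓ (hT.mem_iff.1 (hSX hℓ)).1) hout
      · obtain ⟨ℓ, hℓ, hvℓ⟩ := hu.2
        exact mem_of_reach v ℓ hℓ hvℓ hout
      · exact absurd hu (hout u)
    · intro hv
      obtain ⟨hvT, hout⟩ := hT.mem_iff.1 (hSX hv)
      refine ⟨?_, fun u hu => hout u hu.1⟩
      rcases hvT with rfl | ⟨u, hu⟩ | ⟨u, hu⟩
      · exact .inl rfl
      · exact .inr (.inl ⟨u, hu, v, hv, .refl⟩)
      · exact absurd hu (hout u)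

lemma IsConnectingSubtree.minWeightTreePD_le {T : Set (V × V)} {S : Set V}
    (hT : N.IsConnectingSubtree T S) :
    N.minWeightTreePD S ≤ N.subtreeWeight T :=
  csInf_le ⟨0, by rintro t ⟨T, -, rfl⟩; exact N.subtreeWeight_nonneg T⟩ ⟨T, hT, rfl⟩

lemma IsConnectingSubtree.minWeightTreePD_le_of_subset {T : Set (V × V)} {X S : Set V}
    (hT : N.IsConnectingSubtree T X) (hSX : S ⊆ X) (hS : S.Nonempty) :
    N.minWeightTreePD S ≤ N.subtreeWeight T := by
  obtain ⟨T', hT'T, hT'⟩ := hT.exists_subset hSX hS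
  exact hT'.minWeightTreePD_le.trans (N.subtreeWeight_mono hT'T)

variable (N)

/-- Choose a parent for every vertex other than the root and prune the resulting spanning
arborescence to the leaves. -/
lemma exists_isConnectingSubtree_leaves (hX : N.leaves.Nonempty) :
    ∃ T, N.IsConnectingSubtree T N.leaves := by
  have hparent : ∀ v, ∃ u, v ∈ N.verts → v ≠ N.root → (u, v) ∈ N.arcs := by
    intro v
    by_cases hv : v ∈ N.verts ∧ v ≠ N.root
    · rcases (N.reach v hv.1).cases_tail with h | ⟨u, -, hu⟩
      · exact absurd h hv.2
      · exact ⟨u, fun _ _ => hu⟩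
    · exact ⟨v, fun h h' => absurd ⟨h, h'⟩ hv⟩
  choose par hpar using hparent
  set T : Set (V × V) := {e | e.2 ∈ N.verts ∧ e.2 ≠ N.root ∧ e.1 = par e.2}
  have hreach : ∀ v ∈ N.verts, Relation.ReflTransGen (fun a b => (a, b) ∈ T) N.root v := by
    intro v
    induction v using N.wellFounded_arc.induction with
    | _ v ih =>
      intro hv
      by_cases hvr : v = N.root
      · rw [hvr]
      · have hpv := hpar v hv hvr
        exact (ih _ hpv (N.arc_mem _ hpv).1).tail ⟨hv, hvr, rfl⟩
  have hT : N.IsConnectingSubtree T {v | inTree T N.root v ∧ ∀ u, (v, u) ∉ T} :=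
    isConnectingSubtree_of
      (fun ⟨a, b⟩ ⟨hv, hr, he⟩ => by rw [show a = par b from he]; exact hpar b hv hr)
      (fun _ _ _ ⟨_, _, hu⟩ ⟨_, _, hu'⟩ => hu.trans hu'.symm)
      (fun _ _ ⟨hv, _, _⟩ => hreach _ hv) rfl
  have hX_sinks : N.leaves ⊆ {v | inTree T N.root v ∧ ∀ u, (v, u) ∉ T} := by
    intro v hv
    refine ⟨?_, fun u ⟨hu, hur, hpu⟩ => hv.2 u ?_⟩
    · by_cases hvr : v = N.root
      · exact .inl hvr
      · exact .inr (.inl ⟨par v, hv.1, hvr, rfl⟩)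
    · rw [show v = par u from hpu]
      exact hpar u hu hur
  obtain ⟨T', -, hT'⟩ := hT.exists_subset hX_sinks hX
  exact ⟨T', hT'⟩

lemma le_minWeightTreePD {S : Set V} {c : ℝ} (hS : ∃ T, N.IsConnectingSubtree T S)
    (h : ∀ T, N.IsConnectingSubtree T S → c ≤ N.subtreeWeight T) :
    c ≤ N.minWeightTreePD S := by
  obtain ⟨T, hT⟩ := hS
  refine le_csInf ⟨_, T, hT, rfl⟩ ?_
  rintro t ⟨T, hT, rfl⟩
  exact h T hT

lemma exists_subtreeWeight_eq_minWeightTreePD {S : Set V}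
    (hS : ∃ T, N.IsConnectingSubtree T S) :
    ∃ T, N.IsConnectingSubtree T S ∧ N.subtreeWeight T = N.minWeightTreePD S := by
  obtain ⟨T, hT⟩ := hS
  set W := {t | ∃ T, N.IsConnectingSubtree T S ∧ t = N.subtreeWeight T}
  have hW : W.Finite :=
    ((N.arcs.finite_toSet.finite_subsets).image N.subtreeWeight).subset
      fun _ ⟨T, hT, ht⟩ => ⟨T, hT.subset, ht.symm⟩
  obtain ⟨T', hT', ht⟩ := Set.Nonempty.csInf_mem (s := W) ⟨_, T, hT, rfl⟩ hW
  exact ⟨T', hT', ht.symm⟩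

end General

section Subdivision

open Sum

structure IsSubdivision (N : RWDigraph V) (p x : V) (r : ℕ)
    (N' : RWDigraph (V ⊕ Fin r ⊕ Fin r)) : Prop where
  root_eq : N'.root = inl N.root
  mem_verts : ∀ a : V ⊕ Fin r ⊕ Fin r, a ∈ N'.verts ↔
    ((∃ b ∈ N.verts, a = inl b) ∨ (∃ j : Fin r, a = inr (inl j)) ∨
      (∃ j : Fin r, a = inr (inr j)))
  mem_arcs : ∀ a b : V ⊕ Fin r ⊕ Fin r, (a, b) ∈ N'.arcs ↔ N.subdivArc p x r a b
  w_eq : ∀ e, N'.w e = N.subdivW p x r e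

variable {r : ℕ}

def liftTree (N' : RWDigraph (V ⊕ Fin r ⊕ Fin r)) (T : Set (V × V)) :
    Set ((V ⊕ Fin r ⊕ Fin r) × (V ⊕ Fin r ⊕ Fin r)) :=
  {e | e ∈ N'.arcs ∧ ∀ a b, e = (inl a, inl b) → (a, b) ∈ T}

noncomputable def liftArc (p x : V) (j : Fin r) (e : V × V) :
    (V ⊕ Fin r ⊕ Fin r) × (V ⊕ Fin r ⊕ Fin r) :=
  if e = (p, x) then (inr (inl j), inl x) else (inl e.1, inl e.2)

/-- Collapses the new path onto the arc `(p, x)`. -/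
def collapseOnto (p : V) : V ⊕ Fin r ⊕ Fin r → V :=
  Sum.elim id fun _ => p

def projTree (T' : Set ((V ⊕ Fin r ⊕ Fin r) × (V ⊕ Fin r ⊕ Fin r))) (p x : V) :
    Set (V × V) :=
  {e | (inl e.1, inl e.2) ∈ T' ∨ e = (p, x)}

variable {N' : RWDigraph (V ⊕ Fin r ⊕ Fin r)} {T : Set (V × V)}
  {T' : Set ((V ⊕ Fin r ⊕ Fin r) × (V ⊕ Fin r ⊕ Fin r))}

lemma liftArc_injective {p x : V} {j : Fin r} : Function.Injective (liftArc p x j) := by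
  intro e e' hee'
  by_cases he : e = (p, x) <;> by_cases he' : e' = (p, x) <;>
    simp only [liftArc, he, he', if_true, if_false] at hee'
  · rw [he, he']
  · simp at hee'
  · simp at hee'
  · simpa [Prod.ext_iff] using hee'

lemma mem_liftTree_of_inr_left {i : Fin r ⊕ Fin r} {v : V ⊕ Fin r ⊕ Fin r}
    (hiv : (inr i, v) ∈ N'.arcs) : (inr i, v) ∈ N'.liftTree T :=
  ⟨hiv, fun _ _ he => by simp at he⟩

lemma mem_liftTree_of_inr_right {u : V ⊕ Fin r ⊕ Fin r} {i : Fin r ⊕ Fin r}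
    (hui : (u, inr i) ∈ N'.arcs) : (u, inr i) ∈ N'.liftTree T :=
  ⟨hui, fun _ _ he => by simp at he⟩

namespace IsSubdivision

variable {N : RWDigraph V} {p x : V}

lemma leaves_eq (h : N.IsSubdivision p x r N') (hpx : (p, x) ∈ N.arcs) (hr : 1 ≤ r) :
    N'.leaves = inl '' N.leaves ∪ Set.range fun j => inr (inr j) := by
  ext (a | j | j)
  · simp only [Set.mem_union, Set.mem_image, inl.injEq, exists_eq_right, Set.mem_range,
      reduceCtorEq, exists_false, or_false]
    constructor
    · rintro ⟨hv, hout⟩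
      refine ⟨by simpa using (h.mem_verts _).1 hv, fun c hac => ?_⟩
      by_cases hap : a = p
      · exact hout (inr (inl ⟨0, hr⟩)) ((h.mem_arcs _ _).2 ⟨hap, rfl⟩)
      · exact hout (inl c) ((h.mem_arcs _ _).2 ⟨hac, fun hax => hap hax.1⟩)
    · rintro ⟨hv, hout⟩
      refine ⟨(h.mem_verts _).2 (.inl ⟨a, hv, rfl⟩), fun c hc => ?_⟩
      rcases c with c | j | j <;> replace hc := (h.mem_arcs _ _).1 hc
      · exact hout c hc.1
      · exact hout x (hc.1 ▸ hpx)
      · exact hc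
  · simp [leaves, Arc, h.mem_arcs, subdivArc]
  · simp [leaves, Arc, h.mem_verts, h.mem_arcs, subdivArc]

lemma inl_inl_notMem_arcs (h : N.IsSubdivision p x r N')
    (hunique : ∀ q : V, (q, x) ∈ N.arcs → q = p) (a : V) : (inl a, inl x) ∉ N'.arcs := by
  intro hax
  obtain ⟨hax, hne⟩ := (h.mem_arcs _ _).1 hax
  exact hne ⟨hunique a hax, rfl⟩

lemma eq_or_inl_of_mem_arcs (h : N.IsSubdivision p x r N')
    (hunique : ∀ q : V, (q, x) ∈ N.arcs → q = p) {u u' v : V ⊕ Fin r ⊕ Fin r}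
    (hu : (u, v) ∈ N'.arcs) (hu' : (u', v) ∈ N'.arcs) :
    u = u' ∨ ∃ a a' b, u = inl a ∧ u' = inl a' ∧ v = inl b := by
  rw [h.mem_arcs] at hu hu'
  rcases v with b | j | j <;> rcases u with a | i | i <;> rcases u' with a' | i' | i' <;>
    simp only [subdivArc] at hu hu'
  all_goals first
    | exact .inr ⟨_, _, _, rfl, rfl, rfl⟩
    | (left; simp only [inl.injEq, inr.injEq, Fin.ext_iff]
       first | omega | exact hu.1.trans hu'.1.symm)
    | (obtain ⟨rfl, -⟩ := hu'; exact absurd ⟨hunique _ hu.1, rfl⟩ hu.2)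
    | (obtain ⟨rfl, -⟩ := hu; exact absurd ⟨hunique _ hu'.1, rfl⟩ hu'.2)
    | (exfalso; simp_all)

lemma w_liftArc (h : N.IsSubdivision p x r N') (j : Fin r) (e : V × V) :
    N'.w (liftArc p x j e) = N.w e := by
  by_cases he : e = (p, x)
  · rw [he, liftArc, if_pos rfl, h.w_eq]; rfl
  · rw [liftArc, if_neg he, h.w_eq]; rfl

/-- The arcs of `T'` outside the image of `T` under `liftArc` have weight `0`. -/
lemma subtreeWeight_eq (h : N.IsSubdivision p x r N') (hpx : (p, x) ∈ N.arcs) {j : Fin r}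
    (hT' : ∀ e ∈ T', e ∈ N'.arcs) (hpxT : (p, x) ∈ T) (hlast : (inr (inl j), inl x) ∈ T')
    (hinl : ∀ a b, (inl a, inl b) ∈ T' ↔ (a, b) ∈ T ∧ (a, b) ≠ (p, x)) :
    N'.subtreeWeight T' = N.subtreeWeight T := by
  have hj : (j : ℕ) = r - 1 := ((h.mem_arcs _ _).1 (hT' _ hlast)).2
  have hsub : (N.arcs.filter (· ∈ T)).image (liftArc p x j) ⊆ N'.arcs.filter (· ∈ T') := by
    simp only [Finset.image_subset_iff, Finset.mem_filter]
    intro e ⟨_, he⟩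
    have hfe : liftArc p x j e ∈ T' := by
      by_cases hepx : e = (p, x)
      · rwa [liftArc, if_pos hepx]
      · rw [liftArc, if_neg hepx]
        exact (hinl e.1 e.2).2 ⟨he, hepx⟩
    exact ⟨hT' _ hfe, hfe⟩
  have hzero : ∀ e ∈ N'.arcs.filter (· ∈ T'),
      e ∉ (N.arcs.filter (· ∈ T)).image (liftArc p x j) → N'.w e = 0 := by
    simp only [Finset.mem_filter, Finset.mem_image, not_exists, not_and]
    rintro ⟨a | i | i, b | i' | i'⟩ ⟨harc, he⟩ hnot <;> rw [h.w_eq] <;> try rfl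
    · obtain ⟨hab, hne⟩ := (hinl a b).1 he
      exact (hnot _ ⟨((h.mem_arcs _ _).1 harc).1, hab⟩ (if_neg hne)).elim
    · obtain ⟨rfl, hi⟩ := (h.mem_arcs _ _).1 harc
      obtain rfl : i = j := Fin.ext (hi.trans hj.symm)
      exact (hnot _ ⟨hpx, hpxT⟩ (if_pos rfl)).elim
  unfold subtreeWeight
  rw [← Finset.sum_subset hsub hzero, Finset.sum_image liftArc_injective.injOn]
  exact Finset.sum_congr rfl fun e _ => h.w_liftArc j e

lemma inl_inl_mem_liftTree_iff (h : N.IsSubdivision p x r N') (hT : ∀ e ∈ T, e ∈ N.arcs)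
    {a b : V} : (inl a, inl b) ∈ N'.liftTree T ↔ (a, b) ∈ T ∧ (a, b) ≠ (p, x) := by
  simp only [liftTree, Set.mem_ofPred_eq, h.mem_arcs, subdivArc, inl.injEq,
    Prod.ext_iff, ne_eq]
  constructor
  · rintro ⟨⟨-, hne⟩, hab⟩
    exact ⟨hab a b ⟨rfl, rfl⟩, hne⟩
  · rintro ⟨hab, hne⟩
    exact ⟨⟨hT _ hab, hne⟩, by rintro a b ⟨rfl, rfl⟩; exact hab⟩

lemma reflTransGen_liftTree_mid (h : N.IsSubdivision p x r N') (j : Fin r) :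
    Relation.ReflTransGen (fun u v => (u, v) ∈ N'.liftTree T) (inl p) (inr (inl j)) := by
  obtain ⟨j, hj⟩ := j
  induction j with
  | zero => exact .single (mem_liftTree_of_inr_right ((h.mem_arcs _ _).2 ⟨rfl, rfl⟩))
  | succ j ih =>
    exact (ih (by omega)).tail (mem_liftTree_of_inr_left ((h.mem_arcs _ _).2 rfl))

lemma reflTransGen_liftTree_inl (h : N.IsSubdivision p x r N') (hr : 1 ≤ r)
    (hT : ∀ e ∈ T, e ∈ N.arcs) {a b : V}
    (hab : Relation.ReflTransGen (fun u v => (u, v) ∈ T) a b) :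
    Relation.ReflTransGen (fun u v => (u, v) ∈ N'.liftTree T) (inl a) (inl b) := by
  refine Relation.ReflTransGen.lift' inl (fun a b hab => ?_) _ _ hab
  by_cases hpx : (a, b) = (p, x)
  · obtain ⟨rfl, rfl⟩ := Prod.ext_iff.1 hpx
    exact (h.reflTransGen_liftTree_mid ⟨r - 1, by omega⟩).tail
      (mem_liftTree_of_inr_left ((h.mem_arcs _ _).2 ⟨rfl, rfl⟩))
  · exact .single ((h.inl_inl_mem_liftTree_iff hT).2 ⟨hab, hpx⟩)

lemma inTree_of_inTree_liftTree_inl (h : N.IsSubdivision p x r N') (hpxT : (p, x) ∈ T) {b : V}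
    (hb : inTree (N'.liftTree T) N'.root (inl b)) : inTree T N.root b := by
  rcases hb with hb | ⟨a | i | i, hab⟩ | ⟨c | j | j, hbc⟩
  · exact .inl (inl_injective (hb.trans h.root_eq))
  · exact .inr (.inl ⟨a, hab.2 a b rfl⟩)
  · obtain ⟨rfl, -⟩ := (h.mem_arcs _ _).1 hab.1
    exact .inr (.inl ⟨p, hpxT⟩)
  · exact ((h.mem_arcs _ _).1 hab.1).elim
  · exact .inr (.inr ⟨c, hbc.2 b c rfl⟩)
  · obtain ⟨rfl, -⟩ := (h.mem_arcs _ _).1 hbc.1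
    exact .inr (.inr ⟨x, hpxT⟩)
  · exact ((h.mem_arcs _ _).1 hbc.1).elim

lemma forall_notMem_liftTree_inl_iff (h : N.IsSubdivision p x r N') (hr : 1 ≤ r)
    (hT : ∀ e ∈ T, e ∈ N.arcs) (hpxT : (p, x) ∈ T) {b : V} :
    (∀ u, (inl b, u) ∉ N'.liftTree T) ↔ ∀ c, (b, c) ∉ T := by
  constructor
  · intro hout c hbc
    by_cases hpx : (b, c) = (p, x)
    · obtain ⟨rfl, rfl⟩ := Prod.ext_iff.1 hpx
      exact hout (inr (inl ⟨0, hr⟩))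
        (mem_liftTree_of_inr_right ((h.mem_arcs _ _).2 ⟨rfl, rfl⟩))
    · exact hout (inl c) ((h.inl_inl_mem_liftTree_iff hT).2 ⟨hbc, hpx⟩)
  · rintro hout (c | j | j) hbc
    · exact hout c ((h.inl_inl_mem_liftTree_iff hT).1 hbc).1
    · obtain ⟨rfl, -⟩ := (h.mem_arcs _ _).1 hbc.1
      exact hout x hpxT
    · exact (h.mem_arcs _ _).1 hbc.1

lemma isConnectingSubtree_liftTree (h : N.IsSubdivision p x r N') (hr : 1 ≤ r)
    (hpx : (p, x) ∈ N.arcs) (hunique : ∀ q : V, (q, x) ∈ N.arcs → q = p) {S : Set V}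
    (hT : N.IsConnectingSubtree T S) (hxS : x ∈ S) :
    N'.IsConnectingSubtree (N'.liftTree T) (inl '' S ∪ Set.range fun j => inr (inr j)) := by
  have hpxT := hT.mem_of_unique_parent hxS hpx hunique
  have reach_inl : ∀ b, inTree T N.root b →
      Relation.ReflTransGen (fun u v => (u, v) ∈ N'.liftTree T) N'.root (inl b) := fun b hb =>
    h.root_eq ▸ h.reflTransGen_liftTree_inl hr hT.subset (hT.reach_root b hb)
  have reach_mid : ∀ j, Relation.ReflTransGen (fun u v => (u, v) ∈ N'.liftTree T) N'.root
      (inr (inl j)) := fun j =>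
    (reach_inl p (.inr (.inr ⟨x, hpxT⟩))).trans (h.reflTransGen_liftTree_mid j)
  refine isConnectingSubtree_of (fun e he => he.1) (fun u u' v hu hu' => ?_) ?_ ?_
  · rcases h.eq_or_inl_of_mem_arcs hunique hu.1 hu'.1 with heq | ⟨a, a', b, rfl, rfl, rfl⟩
    · exact heq
    · exact congrArg inl (hT.unique_parent a a' b (hu.2 a b rfl) (hu'.2 a' b rfl))
  · rintro (a | i | i) (b | j | j) huv <;> have harc := (h.mem_arcs _ _).1 huv.1 <;>
      simp only [subdivArc] at harc
    all_goals first
      | exact reach_mid j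
      | exact reach_inl b (.inr (.inl ⟨a, huv.2 a b rfl⟩))
      | (obtain ⟨rfl, -⟩ := harc; exact reach_inl _ (.inr (.inl ⟨p, hpxT⟩)))
      | (obtain rfl := harc; exact (reach_mid _).tail huv)
  · ext (b | j | j)
    · simp only [Set.mem_ofPred_eq, Set.mem_union, Set.mem_image, inl.injEq, exists_eq_right,
        Set.mem_range, reduceCtorEq, exists_false, or_false, hT.mem_iff,
        h.forall_notMem_liftTree_inl_iff hr hT.subset hpxT]
      refine and_congr_left fun _ => ⟨h.inTree_of_inTree_liftTree_inl hpxT, fun hb => ?_⟩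
      exact inTree_of_reflTransGen (reach_inl b hb)
    · simp only [Set.mem_ofPred_eq, Set.mem_union, Set.mem_image, reduceCtorEq, and_false,
        exists_false, Set.mem_range, inr.injEq, false_or, iff_false, not_and]
      exact fun _ hout => hout _ (mem_liftTree_of_inr_left ((h.mem_arcs _ (inr (inr j))).2 rfl))
    · simp only [Set.mem_ofPred_eq, Set.mem_union, Set.mem_image, reduceCtorEq, and_false,
        exists_false, Set.mem_range, inr.injEq, exists_eq, or_true, iff_true]
      refine ⟨.inr (.inl ⟨inr (inl j),
        mem_liftTree_of_inr_left ((h.mem_arcs (inr (inl j)) (inr (inr j))).2 rfl)⟩), ?_⟩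
      exact fun u hu => (h.mem_arcs _ _).1 hu.1

lemma subtreeWeight_liftTree (h : N.IsSubdivision p x r N') (hr : 1 ≤ r)
    (hpx : (p, x) ∈ N.arcs) (hT : ∀ e ∈ T, e ∈ N.arcs) (hpxT : (p, x) ∈ T) :
    N'.subtreeWeight (N'.liftTree T) = N.subtreeWeight T :=
  h.subtreeWeight_eq hpx (j := ⟨r - 1, by omega⟩) (fun e he => he.1) hpxT
    (mem_liftTree_of_inr_left ((h.mem_arcs _ _).2 ⟨rfl, rfl⟩))
    fun _ _ => h.inl_inl_mem_liftTree_iff hT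

lemma reflTransGen_projTree (h : N.IsSubdivision p x r N') (hT' : ∀ e ∈ T', e ∈ N'.arcs)
    {u v : V ⊕ Fin r ⊕ Fin r} (huv : Relation.ReflTransGen (fun a b => (a, b) ∈ T') u v) :
    Relation.ReflTransGen (fun a b => (a, b) ∈ projTree T' p x)
      (collapseOnto p u) (collapseOnto p v) := by
  refine Relation.ReflTransGen.lift' (collapseOnto p) (fun u v huv => ?_) _ _ huv
  have harc := (h.mem_arcs _ _).1 (hT' _ huv)
  rcases u with a | i | i <;> rcases v with b | j | j <;> simp only [subdivArc] at harc
  · exact .single (.inl huv)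
  · obtain ⟨rfl, -⟩ := harc
    exact .refl
  · obtain ⟨rfl, -⟩ := harc
    exact .single (.inr rfl)
  all_goals exact .refl

lemma exists_mid_mem_of_isConnectingSubtree (h : N.IsSubdivision p x r N') (hpx : (p, x) ∈ N.arcs)
    (hunique : ∀ q : V, (q, x) ∈ N.arcs → q = p) {S : Set V}
    (hT' : N'.IsConnectingSubtree T' (inl '' S)) (hxS : x ∈ S) :
    ∃ j, (inr (inl j), inl x) ∈ T' := by
  obtain ⟨hx | ⟨a | j | j, hux⟩ | ⟨u, hxu⟩, hout⟩ := hT'.mem_iff.1 ⟨x, hxS, rfl⟩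
  · exact absurd (inl_injective (hx.trans h.root_eq)) (N.ne_root_of_mem_arcs hpx)
  · exact absurd (hT'.subset _ hux) (h.inl_inl_notMem_arcs hunique a)
  · exact ⟨j, hux⟩
  · exact ((h.mem_arcs _ _).1 (hT'.subset _ hux)).elim
  · exact absurd hxu (hout u)

lemma reflTransGen_projTree_root (h : N.IsSubdivision p x r N') {S' : Set (V ⊕ Fin r ⊕ Fin r)}
    (hT' : N'.IsConnectingSubtree T' S') {v : V} (hv : inTree T' N'.root (inl v)) :
    Relation.ReflTransGen (fun a b => (a, b) ∈ projTree T' p x) N.root v := by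
  simpa [collapseOnto, h.root_eq] using h.reflTransGen_projTree hT'.subset (hT'.reach_root _ hv)

lemma sinks_projTree (h : N.IsSubdivision p x r N') (hpx : (p, x) ∈ N.arcs) {S : Set V}
    (hS : S ⊆ N.leaves) (hT' : N'.IsConnectingSubtree T' (inl '' S)) {j : Fin r}
    (hjx : (inr (inl j), inl x) ∈ T') :
    {v | inTree (projTree T' p x) N.root v ∧ ∀ u, (v, u) ∉ projTree T' p x} = S := by
  ext v
  rw [Set.mem_ofPred_eq]
  constructor
  · rintro ⟨hv, hout⟩
    refine inl_injective.mem_set_image.1 (hT'.mem_iff.2 ⟨?_, ?_⟩)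
    · rcases hv with rfl | ⟨u, hu | hu⟩ | ⟨u, hvu⟩
      · exact .inl h.root_eq.symm
      · exact .inr (.inl ⟨_, hu⟩)
      · obtain ⟨-, rfl⟩ := Prod.ext_iff.1 hu
        exact .inr (.inl ⟨_, hjx⟩)
      · exact absurd hvu (hout u)
    · rintro (c | i | i) hvc
      · exact hout c (.inl hvc)
      · obtain ⟨rfl, -⟩ := (h.mem_arcs _ _).1 (hT'.subset _ hvc)
        exact hout x (.inr rfl)
      · exact (h.mem_arcs _ _).1 (hT'.subset _ hvc)
  · intro hvS
    obtain ⟨hv, hout⟩ := hT'.mem_iff.1 ⟨v, hvS, rfl⟩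
    refine ⟨inTree_of_reflTransGen (h.reflTransGen_projTree_root hT' hv), ?_⟩
    rintro c (hvc | hvc)
    · exact hout _ hvc
    · obtain ⟨rfl, -⟩ := Prod.ext_iff.1 hvc
      exact (hS hvS).2 _ hpx

lemma isConnectingSubtree_projTree (h : N.IsSubdivision p x r N') (hpx : (p, x) ∈ N.arcs)
    (hunique : ∀ q : V, (q, x) ∈ N.arcs → q = p) {S : Set V} (hS : S ⊆ N.leaves)
    (hT' : N'.IsConnectingSubtree T' (inl '' S)) (hxS : x ∈ S) :
    N.IsConnectingSubtree (projTree T' p x) S := by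
  obtain ⟨j, hjx⟩ := h.exists_mid_mem_of_isConnectingSubtree hpx hunique hT' hxS
  have not_into_x : ∀ a, (inl a, inl x) ∉ T' := fun a hax =>
    h.inl_inl_notMem_arcs hunique a (hT'.subset _ hax)
  refine isConnectingSubtree_of ?_ ?_ ?_ (h.sinks_projTree hpx hS hT' hjx)
  · rintro ⟨a, b⟩ (hab | hab)
    · exact ((h.mem_arcs _ _).1 (hT'.subset _ hab)).1
    · exact hab ▸ hpx
  · rintro u u' v (hu | hu) (hu' | hu')
    · exact inl_injective (hT'.unique_parent _ _ _ hu hu')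
    · obtain ⟨-, rfl⟩ := Prod.ext_iff.1 hu'
      exact absurd hu (not_into_x u)
    · obtain ⟨-, rfl⟩ := Prod.ext_iff.1 hu
      exact absurd hu' (not_into_x u')
    · exact (Prod.ext_iff.1 hu).1.trans (Prod.ext_iff.1 hu').1.symm
  · rintro u v (huv | huv)
    · exact h.reflTransGen_projTree_root hT' (.inr (.inl ⟨_, huv⟩))
    · obtain ⟨-, rfl⟩ := Prod.ext_iff.1 huv
      exact h.reflTransGen_projTree_root hT' (.inr (.inl ⟨_, hjx⟩))

lemma subtreeWeight_projTree (h : N.IsSubdivision p x r N') (hpx : (p, x) ∈ N.arcs)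
    (hunique : ∀ q : V, (q, x) ∈ N.arcs → q = p) {S : Set V}
    (hT' : N'.IsConnectingSubtree T' (inl '' S)) (hxS : x ∈ S) :
    N.subtreeWeight (projTree T' p x) = N'.subtreeWeight T' := by
  obtain ⟨j, hjx⟩ := h.exists_mid_mem_of_isConnectingSubtree hpx hunique hT' hxS
  refine (h.subtreeWeight_eq hpx hT'.subset (.inr rfl) hjx fun a b =>
    ⟨fun hab => ⟨.inl hab, ?_⟩, ?_⟩).symm
  · rintro ⟨rfl, rfl⟩
    exact h.inl_inl_notMem_arcs hunique _ (hT'.subset _ hab)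
  · rintro ⟨hab | hab, hne⟩
    exacts [hab, absurd hab hne]

end IsSubdivision

end Subdivision

end RWDigraph

/-- let `x` be a leaf of `N` whose unique incoming arc is `(p, x)`, and
let `N'` (on vertex set `V ⊕ Fin r ⊕ Fin r`, `r ≥ 1`) be obtained from `N` by replacing
`(p, x)` by a path `p → m 0 → ⋯ → m (r-1) → x` whose final arc carries the weight of
`(p, x)` and whose other arcs have weight `0`, adjoining to each `m j` a new leaf `ℓ j`
via an arc of weight `0`. Then the maximum of `MinWeightTree-PD_{N'}(S')` over all
subsets `S'` of the leaf set of `N'` with `|S'| = |X|` equals `MinWeightTree-PD_N(X)`. -/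
theorem max_minWeightTreePD_subdivided {V : Type} (N : RWDigraph V) (x p : V)
    (hx : x ∈ N.leaves) (hpx : (p, x) ∈ N.arcs)
    (hunique : ∀ q : V, (q, x) ∈ N.arcs → q = p)
    (r : ℕ) (hr : 1 ≤ r)
    (N' : RWDigraph (V ⊕ Fin r ⊕ Fin r))
    (hroot : N'.root = Sum.inl N.root)
    (hverts : ∀ a : V ⊕ Fin r ⊕ Fin r, a ∈ N'.verts ↔
      ((∃ b ∈ N.verts, a = Sum.inl b) ∨ (∃ j : Fin r, a = Sum.inr (Sum.inl j)) ∨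
        (∃ j : Fin r, a = Sum.inr (Sum.inr j))))
    (harcs : ∀ a b : V ⊕ Fin r ⊕ Fin r, (a, b) ∈ N'.arcs ↔ N.subdivArc p x r a b)
    (hw : ∀ e, N'.w e = N.subdivW p x r e) :
    IsGreatest {t : ℝ | ∃ S' : Set (V ⊕ Fin r ⊕ Fin r), S' ⊆ N'.leaves ∧
        S'.ncard = N.leaves.ncard ∧ t = N'.minWeightTreePD S'}
      (N.minWeightTreePD N.leaves) := by
  have h : N.IsSubdivision p x r N' := ⟨hroot, hverts, harcs, hw⟩
  obtain ⟨T, hT, hTw⟩ :=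
    N.exists_subtreeWeight_eq_minWeightTreePD (N.exists_isConnectingSubtree_leaves ⟨x, hx⟩)
  have hT' := h.isConnectingSubtree_liftTree hr hpx hunique hT hx
  rw [← h.leaves_eq hpx hr] at hT'
  have le_max : ∀ S' ⊆ N'.leaves, S'.Nonempty →
      N'.minWeightTreePD S' ≤ N.minWeightTreePD N.leaves := fun S' hS' hne => by
    rw [← hTw, ← h.subtreeWeight_liftTree hr hpx hT.subset
      (hT.mem_of_unique_parent hx hpx hunique)]
    exact hT'.minWeightTreePD_le_of_subset hS' hne
  have hX_sub : Sum.inl '' N.leaves ⊆ N'.leaves := h.leaves_eq hpx hr ▸ Set.subset_union_left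
  refine ⟨⟨_, hX_sub, Set.ncard_image_of_injective _ Sum.inl_injective, ?_⟩, ?_⟩
  · refine le_antisymm (N'.le_minWeightTreePD ?_ fun T' hT'X => ?_)
      (le_max _ hX_sub ⟨_, x, hx, rfl⟩)
    · obtain ⟨T'', -, hT''⟩ := hT'.exists_subset hX_sub ⟨_, x, hx, rfl⟩
      exact ⟨T'', hT''⟩
    · rw [← h.subtreeWeight_projTree hpx hunique hT'X hx]
      exact (h.isConnectingSubtree_projTree hpx hunique subset_rfl hT'X hx).minWeightTreePD_le
  · rintro t ⟨S', hS', hcard, rfl⟩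
    refine le_max S' hS' (Set.nonempty_of_ncard_ne_zero ?_)
    rw [hcard]
    exact (Set.ncard_pos N.finite_leaves).2 ⟨x, hx⟩ |>.ne'
end
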